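/- arXiv:1006.5295 — 9 statements merged into one kernel-verified Lean document; each statement's English description precedes it below -/
import Mathlib

section
/- Inverse Function Theorem for textile maps (field case): Let U = m^l·C^m be an m-adic neighbourhood of 0 and f : U → C^m a textile map with f(0) = 0. Assume f = ℓ + h and f(U) ⊆ W, where ℓ : U → W is a linear textile bijection with linear inverse ℓ̃ : W → U (ℓ∘ℓ̃ = id_W, ℓ̃∘ℓ = id_U). If ℓ̃∘h is contractive on U, then f admits an inverse on U: there is a textile map g : f(U) → U with f∘g = id on f(U) and g∘f = id on U; in particular id + ℓ̃∘h is a bijection of U onto itself and f(U) = ℓ(U). -/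
/- Inverse Function Theorem for textile maps (field case). -/

noncomputable section

open MvPowerSeries

/-- Coefficient family of a vector of cords. -/
def cf {k : Type} [Field k] {n q : ℕ} (c : Fin q → MvPowerSeries (Fin n) k) :
    Fin q × (Fin n →₀ ℕ) → k :=
  fun ν => MvPowerSeries.coeff ν.2 (c ν.1)

/-- Data of a textile map `C^q → C^p`: every coefficient of the output is a polynomial in
finitely many coefficients of the input. -/
def TexData (k : Type) [Field k] (n q p : ℕ) : Type :=
  Fin p × (Fin n →₀ ℕ) → MvPolynomial (Fin q × (Fin n →₀ ℕ)) k

/-- Evaluation of textile data. -/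
def TexData.eval {k : Type} [Field k] {n q p : ℕ} (F : TexData k n q p)
    (c : Fin q → MvPowerSeries (Fin n) k) : Fin p → MvPowerSeries (Fin n) k :=
  fun j => (fun d => MvPolynomial.eval (cf c) (F (j, d)) : (Fin n →₀ ℕ) → k)

/-- A map between cord spaces is textile if it is the evaluation of some textile data. -/
def IsTextile {k : Type} [Field k] {n q p : ℕ}
    (f : (Fin q → MvPowerSeries (Fin n) k) → Fin p → MvPowerSeries (Fin n) k) : Prop :=
  ∃ F : TexData k n q p, ∀ c, f c = F.eval c

/-- The order of a vector of cords, with values in `ℕ∞` (the order of `0` is `⊤`). -/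
def ordV {k : Type} [Field k] {n q : ℕ} (c : Fin q → MvPowerSeries (Fin n) k) : ℕ∞ :=
  sInf {N : ℕ∞ | ∃ (j : Fin q) (d : Fin n →₀ ℕ),
    MvPowerSeries.coeff d (c j) ≠ 0 ∧ N = (d.sum fun _ e => e : ℕ)}

/-- The `m`-adic neighbourhood `m^l · C^q` of `0`. -/
def nbhd (k : Type) [Field k] (n q l : ℕ) : Set (Fin q → MvPowerSeries (Fin n) k) :=
  {c | ∀ (j : Fin q) (d : Fin n →₀ ℕ),
    (d.sum fun _ e => e) < l → MvPowerSeries.coeff d (c j) = 0}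

/-- `h` is contractive on `U`: it strictly increases the order of differences. -/
def ContractiveOn {k : Type} [Field k] {n q p : ℕ}
    (h : (Fin q → MvPowerSeries (Fin n) k) → Fin p → MvPowerSeries (Fin n) k)
    (U : Set (Fin q → MvPowerSeries (Fin n) k)) : Prop :=
  ∀ a ∈ U, ∀ b ∈ U, a ≠ b → ordV (a - b) < ordV (h a - h b)

/-
Put `H := ℓt ∘ f - id`; it is textile on all of `C^m` and agrees with `ℓt ∘ h` on `U`, so it is
contractive there, and `ℓt ∘ f = id + H`. The equation `a + H a = c` is solved by the Picard
iteration `x₀ = c`, `x_{K+1} = c - H x_K`: contractivity makes `x_{K+1} - x_K` of order `≥ K`, so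
every coefficient of `x_K` becomes stationary, and the limit is textile because its coefficient
of degree `e` is already that of the textile map `c ↦ x_{e+1}`. Contractivity also makes
`id + H` injective on `U`, so it is a bijection of `U`, and `g := (id + H)⁻¹ ∘ ℓt` inverts `f`.
-/

section Textile

variable {k : Type} [Field k] {n q p r : ℕ}

theorem isTextile_iff {f : (Fin q → MvPowerSeries (Fin n) k) → Fin p → MvPowerSeries (Fin n) k} :
    IsTextile f ↔ ∃ F : Fin p × (Fin n →₀ ℕ) → MvPolynomial (Fin q × (Fin n →₀ ℕ)) k,
      ∀ c j d, coeff d (f c j) = MvPolynomial.eval (cf c) (F (j, d)) := by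
  constructor
  · rintro ⟨F, hF⟩
    exact ⟨F, fun c j d => by rw [hF]; rfl⟩
  · rintro ⟨F, hF⟩
    exact ⟨F, fun c => funext fun j => ext fun d => hF c j d⟩

theorem isTextile_id : IsTextile fun c : Fin q → MvPowerSeries (Fin n) k => c :=
  isTextile_iff.mpr ⟨MvPolynomial.X, fun _ _ _ => by rw [MvPolynomial.eval_X]; rfl⟩

theorem IsTextile.comp {f : (Fin q → MvPowerSeries (Fin n) k) → Fin p → MvPowerSeries (Fin n) k}
    {g : (Fin r → MvPowerSeries (Fin n) k) → Fin q → MvPowerSeries (Fin n) k}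
    (hf : IsTextile f) (hg : IsTextile g) : IsTextile fun c => f (g c) := by
  obtain ⟨F, hF⟩ := isTextile_iff.mp hf
  obtain ⟨G, hG⟩ := isTextile_iff.mp hg
  refine isTextile_iff.mpr ⟨fun ν => MvPolynomial.bind₁ G (F ν), fun c j d => ?_⟩
  have hcf : cf (g c) = fun ν => MvPolynomial.eval (cf c) (G ν) := funext fun ν => hG c ν.1 ν.2
  rw [hF, hcf]
  exact (MvPolynomial.eval₂Hom_bind₁ (RingHom.id k) (cf c) G (F (j, d))).symm

theorem IsTextile.sub {f g : (Fin q → MvPowerSeries (Fin n) k) → Fin p → MvPowerSeries (Fin n) k}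
    (hf : IsTextile f) (hg : IsTextile g) : IsTextile fun c => f c - g c := by
  obtain ⟨F, hF⟩ := isTextile_iff.mp hf
  obtain ⟨G, hG⟩ := isTextile_iff.mp hg
  refine isTextile_iff.mpr ⟨fun ν => F ν - G ν, fun c j d => ?_⟩
  rw [Pi.sub_apply, map_sub, hF, hG, map_sub]

theorem isTextile_of_forall_coeff
    {g : (Fin q → MvPowerSeries (Fin n) k) → Fin p → MvPowerSeries (Fin n) k}
    (hg : ∀ j d, ∃ G : (Fin q → MvPowerSeries (Fin n) k) → Fin p → MvPowerSeries (Fin n) k,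
      IsTextile G ∧ ∀ c, coeff d (g c j) = coeff d (G c j)) :
    IsTextile g := by
  choose G hG hgG using hg
  choose F hF using fun j d => isTextile_iff.mp (hG j d)
  exact isTextile_iff.mpr ⟨fun ν => F ν.1 ν.2 ν, fun c j d => by rw [hgG, hF]⟩

end Textile

section Nbhd

variable {k : Type} [Field k] {n q p : ℕ}

/-- `a - b ∈ nbhd k n q N` says `a ≡ b mod m^N`. -/
def nbhdAddSubgroup (k : Type) [Field k] (n q l : ℕ) :
    AddSubgroup (Fin q → MvPowerSeries (Fin n) k) where
  carrier := nbhd k n q l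
  add_mem' ha hb j d hd := by rw [Pi.add_apply, map_add, ha j d hd, hb j d hd, add_zero]
  zero_mem' _ _ _ := by rw [Pi.zero_apply, map_zero]
  neg_mem' ha j d hd := by rw [Pi.neg_apply, map_neg, ha j d hd, neg_zero]

theorem mem_nbhd_zero (c : Fin q → MvPowerSeries (Fin n) k) : c ∈ nbhd k n q 0 :=
  fun _ _ hd => absurd hd (Nat.not_lt_zero _)

theorem nbhd_antitone {N N' : ℕ} (h : N ≤ N') : nbhd k n q N' ⊆ nbhd k n q N :=
  fun _ hc j d hd => hc j d (hd.trans_le h)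

theorem eq_zero_of_forall_mem_nbhd {c : Fin q → MvPowerSeries (Fin n) k}
    (hc : ∀ N, c ∈ nbhd k n q N) : c = 0 := by
  funext j; ext d
  exact hc (d.degree + 1) j d (Nat.lt_succ_self _)

theorem mem_nbhd_iff_le_ordV {c : Fin q → MvPowerSeries (Fin n) k} {N : ℕ} :
    c ∈ nbhd k n q N ↔ (N : ℕ∞) ≤ ordV c := by
  constructor
  · refine fun hc => le_sInf ?_
    rintro _ ⟨j, d, hne, rfl⟩
    exact_mod_cast not_lt.mp fun hlt => hne (hc j d hlt)
  · intro hc j d hd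
    by_contra hne
    have hlt : ((d.degree : ℕ) : ℕ∞) < N := by exact_mod_cast hd
    exact (hlt.trans_le hc).not_ge (sInf_le ⟨j, d, hne, rfl⟩)

theorem ordV_neg (c : Fin q → MvPowerSeries (Fin n) k) : ordV (-c) = ordV c := by
  simp only [ordV, Pi.neg_apply, map_neg, ne_eq, neg_eq_zero]

theorem ContractiveOn.sub_mem_nbhd_succ
    {H : (Fin q → MvPowerSeries (Fin n) k) → Fin p → MvPowerSeries (Fin n) k}
    {U : Set (Fin q → MvPowerSeries (Fin n) k)} (hH : ContractiveOn H U)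
    {a b : Fin q → MvPowerSeries (Fin n) k} (ha : a ∈ U) (hb : b ∈ U) {N : ℕ}
    (hab : a - b ∈ nbhd k n q N) : H a - H b ∈ nbhd k n p (N + 1) := by
  by_cases heq : a = b
  · rw [heq, sub_self]
    exact (nbhdAddSubgroup k n p (N + 1)).zero_mem
  · rw [mem_nbhd_iff_le_ordV] at hab ⊢
    exact_mod_cast Order.add_one_le_of_lt (hab.trans_lt (hH a ha b hb heq))

theorem ContractiveOn.injOn_add_self
    {H : (Fin q → MvPowerSeries (Fin n) k) → Fin q → MvPowerSeries (Fin n) k}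
    {U : Set (Fin q → MvPowerSeries (Fin n) k)} (hH : ContractiveOn H U) :
    Set.InjOn (fun a => a + H a) U := by
  intro a ha b hb hab
  by_contra hne
  have hsum : (H a - H b) + (a - b) = 0 := by
    rw [sub_add_sub_comm, add_comm (H a), add_comm (H b), sub_eq_zero]; exact hab
  exact (hH a ha b hb hne).ne (by rw [eq_neg_of_add_eq_zero_left hsum, ordV_neg])

theorem ContractiveOn.congr
    {H H' : (Fin q → MvPowerSeries (Fin n) k) → Fin p → MvPowerSeries (Fin n) k}
    {U : Set (Fin q → MvPowerSeries (Fin n) k)} (hH : ContractiveOn H U) (h : Set.EqOn H H' U) :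
    ContractiveOn H' U := by
  intro a ha b hb hab
  rw [← h ha, ← h hb]
  exact hH a ha b hb hab

end Nbhd

section FixedPoint

variable {k : Type} [Field k] {n q : ℕ}

def fixedPointIter (H : (Fin q → MvPowerSeries (Fin n) k) → Fin q → MvPowerSeries (Fin n) k)
    (c : Fin q → MvPowerSeries (Fin n) k) : ℕ → Fin q → MvPowerSeries (Fin n) k
  | 0 => c
  | K + 1 => c - H (fixedPointIter H c K)

/-- The coefficient of degree `e` is read off from the iterate `x_{e+1}`, where it has become
stationary (see `fixedPointLimit_sub_mem_nbhd`). -/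
def fixedPointLimit (H : (Fin q → MvPowerSeries (Fin n) k) → Fin q → MvPowerSeries (Fin n) k)
    (c : Fin q → MvPowerSeries (Fin n) k) : Fin q → MvPowerSeries (Fin n) k :=
  fun j d => coeff d (fixedPointIter H c (d.degree + 1) j)

variable {H : (Fin q → MvPowerSeries (Fin n) k) → Fin q → MvPowerSeries (Fin n) k}

theorem isTextile_fixedPointIter (hH : IsTextile H) (K : ℕ) :
    IsTextile fun c => fixedPointIter H c K := by
  induction K with
  | zero => exact isTextile_id
  | succ K ih => exact isTextile_id.sub (hH.comp ih)

theorem isTextile_fixedPointLimit (hH : IsTextile H) : IsTextile (fixedPointLimit H) :=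
  isTextile_of_forall_coeff fun _ d =>
    ⟨_, isTextile_fixedPointIter hH (d.degree + 1), fun _ => coeff_apply _ _⟩

variable {l : ℕ} (hHU : Set.MapsTo H (nbhd k n q l) (nbhd k n q l))
  (hH : ContractiveOn H (nbhd k n q l)) {c : Fin q → MvPowerSeries (Fin n) k}
  (hc : c ∈ nbhd k n q l)
include hHU hc

theorem fixedPointIter_mem_nbhd (K : ℕ) : fixedPointIter H c K ∈ nbhd k n q l := by
  induction K with
  | zero => exact hc
  | succ K ih => exact (nbhdAddSubgroup k n q l).sub_mem hc (hHU ih)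

include hH

theorem fixedPointIter_succ_sub_mem_nbhd (K : ℕ) :
    fixedPointIter H c (K + 1) - fixedPointIter H c K ∈ nbhd k n q K := by
  induction K with
  | zero => exact mem_nbhd_zero _
  | succ K ih =>
    have hstep : fixedPointIter H c (K + 2) - fixedPointIter H c (K + 1) =
        -(H (fixedPointIter H c (K + 1)) - H (fixedPointIter H c K)) := by
      simp only [fixedPointIter]; abel
    rw [hstep]
    exact (nbhdAddSubgroup k n q (K + 1)).neg_mem <| hH.sub_mem_nbhd_succ
      (fixedPointIter_mem_nbhd hHU hc _) (fixedPointIter_mem_nbhd hHU hc _) ih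

theorem fixedPointIter_sub_mem_nbhd_of_le {K K' : ℕ} (h : K ≤ K') :
    fixedPointIter H c K' - fixedPointIter H c K ∈ nbhd k n q K := by
  induction K', h using Nat.le_induction with
  | base => rw [sub_self]; exact (nbhdAddSubgroup k n q K).zero_mem
  | succ K' hKK' ih =>
    rw [← sub_add_sub_cancel _ (fixedPointIter H c K')]
    exact (nbhdAddSubgroup k n q K).add_mem
      (nbhd_antitone hKK' (fixedPointIter_succ_sub_mem_nbhd hHU hH hc K')) ih

theorem fixedPointLimit_sub_mem_nbhd (K : ℕ) :
    fixedPointLimit H c - fixedPointIter H c K ∈ nbhd k n q K := by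
  intro j d hd
  have hstable := fixedPointIter_sub_mem_nbhd_of_le hHU hH hc (Nat.succ_le_of_lt hd) j d
    (Nat.lt_succ_self _)
  rw [Pi.sub_apply, map_sub, sub_eq_zero] at hstable ⊢
  rw [hstable]
  exact coeff_apply _ _

theorem fixedPointLimit_mem_nbhd : fixedPointLimit H c ∈ nbhd k n q l := by
  rw [← sub_add_cancel (fixedPointLimit H c) (fixedPointIter H c l)]
  exact (nbhdAddSubgroup k n q l).add_mem (fixedPointLimit_sub_mem_nbhd hHU hH hc l)
    (fixedPointIter_mem_nbhd hHU hc l)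

theorem add_map_fixedPointLimit : fixedPointLimit H c + H (fixedPointLimit H c) = c := by
  refine sub_eq_zero.mp (eq_zero_of_forall_mem_nbhd fun K => ?_)
  have hsplit : fixedPointLimit H c + H (fixedPointLimit H c) - c =
      (fixedPointLimit H c - fixedPointIter H c (K + 1)) +
        (H (fixedPointLimit H c) - H (fixedPointIter H c K)) := by
    simp only [fixedPointIter]; abel
  rw [hsplit]
  refine nbhd_antitone (Nat.le_succ K) ((nbhdAddSubgroup k n q (K + 1)).add_mem
    (fixedPointLimit_sub_mem_nbhd hHU hH hc _) ?_)
  exact hH.sub_mem_nbhd_succ (fixedPointLimit_mem_nbhd hHU hH hc)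
    (fixedPointIter_mem_nbhd hHU hc K) (fixedPointLimit_sub_mem_nbhd hHU hH hc K)

omit hc

theorem fixedPointLimit_add_self {a : Fin q → MvPowerSeries (Fin n) k}
    (ha : a ∈ nbhd k n q l) : fixedPointLimit H (a + H a) = a :=
  have hmem : a + H a ∈ nbhd k n q l := (nbhdAddSubgroup k n q l).add_mem ha (hHU ha)
  hH.injOn_add_self (fixedPointLimit_mem_nbhd hHU hH hmem) ha
    (add_map_fixedPointLimit hHU hH hmem)

theorem ContractiveOn.bijOn_add_self :
    Set.BijOn (fun a => a + H a) (nbhd k n q l) (nbhd k n q l) :=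
  ⟨fun _ ha => (nbhdAddSubgroup k n q l).add_mem ha (hHU ha), hH.injOn_add_self,
    fun _ hc => ⟨_, fixedPointLimit_mem_nbhd hHU hH hc, add_map_fixedPointLimit hHU hH hc⟩⟩

end FixedPoint

theorem inverse_function_theorem_textile_general
    {k : Type} [Field k] {n m : ℕ} (l : ℕ)
    (U : Set (Fin m → MvPowerSeries (Fin n) k)) (hU : U = nbhd k n m l)
    (W : Set (Fin m → MvPowerSeries (Fin n) k))
    (f ℓ ℓt h : (Fin m → MvPowerSeries (Fin n) k) → Fin m → MvPowerSeries (Fin n) k)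
    (hf_tex : IsTextile f)
    (hℓt_tex : IsTextile ℓt) (hℓt_lin : IsLinearMap k ℓt)
    (hdecomp : ∀ a ∈ U, f a = ℓ a + h a)
    (hfU : ∀ a ∈ U, f a ∈ W)
    (hℓℓt : ∀ w ∈ W, ℓt w ∈ U ∧ ℓ (ℓt w) = w)
    (hℓtℓ : ∀ a ∈ U, ℓt (ℓ a) = a)
    (hcontr : ContractiveOn (fun a => ℓt (h a)) U) :
    ∃ g : (Fin m → MvPowerSeries (Fin n) k) → Fin m → MvPowerSeries (Fin n) k,
      IsTextile g ∧
      (∀ w ∈ f '' U, g w ∈ U ∧ f (g w) = w) ∧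
      (∀ a ∈ U, g (f a) = a) ∧
      Set.BijOn (fun a => a + ℓt (h a)) U U ∧
      f '' U = ℓ '' U := by
  subst hU
  set H := fun a => ℓt (f a) - a
  have hH_eq : Set.EqOn H (fun a => ℓt (h a)) (nbhd k n m l) := fun a ha => by
    show ℓt (f a) - a = ℓt (h a)
    rw [hdecomp a ha, hℓt_lin.map_add, hℓtℓ a ha, add_sub_cancel_left]
  have hHU : Set.MapsTo H (nbhd k n m l) (nbhd k n m l) := fun a ha =>
    (nbhdAddSubgroup k n m l).sub_mem (hℓℓt _ (hfU a ha)).1 ha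
  have hHc : ContractiveOn H (nbhd k n m l) := hcontr.congr hH_eq.symm
  have hℓtf : ∀ a, ℓt (f a) = a + H a := fun a => (add_sub_cancel a _).symm
  have hginv : ∀ a ∈ nbhd k n m l, fixedPointLimit H (ℓt (f a)) = a := fun a ha => by
    rw [hℓtf]; exact fixedPointLimit_add_self hHU hHc ha
  have hbij := hHc.bijOn_add_self hHU
  refine ⟨fun w => fixedPointLimit H (ℓt w),
    (isTextile_fixedPointLimit ((hℓt_tex.comp hf_tex).sub isTextile_id)).comp hℓt_tex,
    ?_, hginv, hbij.congr fun a ha => congrArg (a + ·) (hH_eq ha), ?_⟩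
  · rintro _ ⟨a, ha, rfl⟩
    beta_reduce
    rw [hginv a ha]
    exact ⟨ha, rfl⟩
  · calc f '' nbhd k n m l = ℓ '' ((fun a => a + H a) '' nbhd k n m l) := by
          rw [Set.image_image]
          refine Set.image_congr fun a ha => ?_
          rw [← hℓtf, (hℓℓt _ (hfU a ha)).2]
      _ = ℓ '' nbhd k n m l := by rw [hbij.image_eq]

/-- **Inverse Function Theorem for textile maps (field case).**
Let `U = m^l·C^m` and let `f : U → C^m` be textile with `f 0 = 0`, `f = ℓ + h` on `U`, and
`f(U) ⊆ W`, where `ℓ : U → W` is a linear textile bijection with linear textile inverse `ℓ̃`.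
If `ℓ̃ ∘ h` is contractive on `U`, then `f` admits a textile inverse `g` on `U`; in particular
`id + ℓ̃∘h` is a bijection of `U` onto itself and `f(U) = ℓ(U)`. -/
theorem inverse_function_theorem_textile
    {k : Type} [Field k] [CharZero k] {n m : ℕ} (l : ℕ)
    (U : Set (Fin m → MvPowerSeries (Fin n) k)) (hU : U = nbhd k n m l)
    (W : Set (Fin m → MvPowerSeries (Fin n) k))
    (f ℓ ℓt h : (Fin m → MvPowerSeries (Fin n) k) → Fin m → MvPowerSeries (Fin n) k)
    (hf_tex : IsTextile f) (hf0 : f 0 = 0)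
    (hℓ_tex : IsTextile ℓ) (hℓ_lin : IsLinearMap k ℓ)
    (hℓt_tex : IsTextile ℓt) (hℓt_lin : IsLinearMap k ℓt)
    (hdecomp : ∀ a ∈ U, f a = ℓ a + h a)
    (hfU : ∀ a ∈ U, f a ∈ W)
    (hℓU : ∀ a ∈ U, ℓ a ∈ W)
    (hℓℓt : ∀ w ∈ W, ℓt w ∈ U ∧ ℓ (ℓt w) = w)
    (hℓtℓ : ∀ a ∈ U, ℓt (ℓ a) = a)
    (hcontr : ContractiveOn (fun a => ℓt (h a)) U) :
    ∃ g : (Fin m → MvPowerSeries (Fin n) k) → Fin m → MvPowerSeries (Fin n) k,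
      IsTextile g ∧
      (∀ w ∈ f '' U, g w ∈ U ∧ f (g w) = w) ∧
      (∀ a ∈ U, g (f a) = a) ∧
      Set.BijOn (fun a => a + ℓt (h a)) U U ∧
      f '' U = ℓ '' U :=
  inverse_function_theorem_textile_general l U hU W f ℓ ℓt h hf_tex hℓt_tex hℓt_lin hdecomp hfU hℓℓt
    hℓtℓ hcontr
end
end

section
/- Characterization of Γ-shifting textile maps: Let L be a positive linear form on ℝ^n, Γ ∈ L(ℤⁿ), U = m^l·C^m, and h : U → C a textile map. Then h is Γ-shifting on U, i.e. ord_L(h(a) − h(b)) ≥ ord_L(a − b) + Γ for all a, b ∈ U, if and only if for every α ∈ ℕⁿ the coefficient h_α depends only on the coefficients c_ν with L·ν̄ ≤ L·α − Γ: whenever a, b ∈ U satisfy a_ν = b_ν for all ν ∈ ℕ^{n+1} with L·ν̄ ≤ L·α − Γ, then h_α(a) = h_α(b). -/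
/- Characterization of Γ-shifting textile maps. -/

noncomputable section

open MvPowerSeries

/-- Data of a textile map `C^q → C`: every coefficient of the output is a polynomial in
finitely many coefficients of the input. -/
def TexData1 (k : Type) [Field k] (n q : ℕ) : Type :=
  (Fin n →₀ ℕ) → MvPolynomial (Fin q × (Fin n →₀ ℕ)) k

/-- Evaluation of textile data with values in `C`. -/
def TexData1.eval {k : Type} [Field k] {n q : ℕ} (H : TexData1 k n q)
    (c : Fin q → MvPowerSeries (Fin n) k) : MvPowerSeries (Fin n) k :=
  (fun d => MvPolynomial.eval (cf c) (H d) : (Fin n →₀ ℕ) → k)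

/-- The value of a positive linear form `L`, given by weights `w`, on a multi-exponent. -/
def Lval {n : ℕ} (w : Fin n → ℝ) (d : Fin n →₀ ℕ) : ℝ :=
  d.sum fun i e => w i * (e : ℝ)

/-- The order of a single power series with respect to `L`, with values in `EReal`
(the order of `0` is `⊤`). -/
def ordL1 {k : Type} [Field k] {n : ℕ} (w : Fin n → ℝ) (c : MvPowerSeries (Fin n) k) : EReal :=
  sInf {x : EReal | ∃ d : Fin n →₀ ℕ, MvPowerSeries.coeff d c ≠ 0 ∧ x = (Lval w d : ℝ)}

/-- The order of a vector of cords with respect to `L`, with values in `EReal`. -/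
def ordLV {k : Type} [Field k] {n q : ℕ} (w : Fin n → ℝ)
    (c : Fin q → MvPowerSeries (Fin n) k) : EReal :=
  sInf {x : EReal | ∃ (j : Fin q) (d : Fin n →₀ ℕ),
    MvPowerSeries.coeff d (c j) ≠ 0 ∧ x = (Lval w d : ℝ)}

/-!
Since `L` has positive weights, only finitely many exponents lie below any bound, so the
`L`-order of a nonzero vector of cords is attained by one of its coefficients. Hence
`ord_L(a - b) + Γ ≤ L·α` holds exactly when `a` and `b` differ at some `ν` with
`L·ν̄ ≤ L·α - Γ`, and the shifting inequality, read coefficient by coefficient, is the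
contrapositive of the dependence condition.
-/

section Lval

variable {n : ℕ} {w : Fin n → ℝ}

lemma mul_le_Lval (hw : ∀ i, 0 ≤ w i) (d : Fin n →₀ ℕ) (i : Fin n) :
    w i * (d i : ℝ) ≤ Lval w d := by
  have hterm : ∀ j, 0 ≤ w j * (d j : ℝ) := fun j => mul_nonneg (hw j) (Nat.cast_nonneg _)
  by_cases hi : i ∈ d.support
  · exact Finset.single_le_sum (fun j _ => hterm j) hi
  · rw [Finsupp.notMem_support_iff.mp hi, Nat.cast_zero, mul_zero]
    exact Finset.sum_nonneg fun j _ => hterm j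

lemma finite_setOf_Lval_le (hw : ∀ i, 0 < w i) (r : ℝ) :
    {d : Fin n →₀ ℕ | Lval w d ≤ r}.Finite := by
  refine (Set.finite_Iic (Finsupp.equivFunOnFinite.symm fun i => ⌈r / w i⌉₊)).subset ?_
  intro d hd i
  have hdi : (d i : ℝ) ≤ r / w i :=
    (le_div_iff₀' (hw i)).mpr ((mul_le_Lval (fun j => (hw j).le) d i).trans hd)
  exact Nat.cast_le.mp (hdi.trans (Nat.le_ceil _))

end Lval

section Order

variable {k : Type} [Field k] {n q : ℕ} {w : Fin n → ℝ}

lemma le_ordL1_iff {x : EReal} {c : MvPowerSeries (Fin n) k} :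
    x ≤ ordL1 w c ↔ ∀ d, coeff d c ≠ 0 → x ≤ Lval w d :=
  le_sInf_iff.trans ⟨fun h d hd => h _ ⟨d, hd, rfl⟩, by rintro h _ ⟨d, hd, rfl⟩; exact h d hd⟩

lemma ordLV_le {c : Fin q → MvPowerSeries (Fin n) k} {j : Fin q} {d : Fin n →₀ ℕ}
    (hd : coeff d (c j) ≠ 0) : ordLV w c ≤ Lval w d :=
  sInf_le ⟨j, d, hd, rfl⟩

lemma ordLV_zero : ordLV w (0 : Fin q → MvPowerSeries (Fin n) k) = ⊤ := by
  simp [ordLV]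

lemma exists_ordLV_eq (hw : ∀ i, 0 < w i) {c : Fin q → MvPowerSeries (Fin n) k}
    (hc : c ≠ 0) : ∃ j d, coeff d (c j) ≠ 0 ∧ ordLV w c = Lval w d := by
  obtain ⟨j₀, d₀, hd₀⟩ : ∃ j d, coeff d (c j) ≠ 0 := by
    by_contra! h
    exact hc (funext fun j => MvPowerSeries.ext (h j))
  let S := {p : Fin q × (Fin n →₀ ℕ) | coeff p.2 (c p.1) ≠ 0 ∧ Lval w p.2 ≤ Lval w d₀}
  have hS : Set.Finite S :=
    (Set.finite_univ.prod (finite_setOf_Lval_le hw (Lval w d₀))).subset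
      fun p hp => ⟨trivial, hp.2⟩
  obtain ⟨⟨j, d⟩, ⟨hd, hdd₀⟩, hmin⟩ :=
    S.exists_min_image (fun p => Lval w p.2) hS ⟨(j₀, d₀), hd₀, le_rfl⟩
  refine ⟨j, d, hd, le_antisymm (ordLV_le hd) (le_sInf ?_)⟩
  rintro _ ⟨j', d', hd', rfl⟩
  rw [EReal.coe_le_coe_iff]
  rcases le_total (Lval w d') (Lval w d₀) with h | h
  · exact hmin (j', d') ⟨hd', h⟩
  · exact hdd₀.trans h

lemma ordLV_add_le_iff (hw : ∀ i, 0 < w i) (c : Fin q → MvPowerSeries (Fin n) k) (Γ r : ℝ) :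
    ordLV w c + Γ ≤ r ↔ ∃ j d, coeff d (c j) ≠ 0 ∧ Lval w d ≤ r - Γ := by
  rw [← EReal.le_sub_iff_add_le (by simp) (by simp), ← EReal.coe_sub]
  constructor
  · intro h
    obtain ⟨j, d, hd, hord⟩ := exists_ordLV_eq hw (c := c) (by
      rintro rfl
      rw [ordLV_zero, top_le_iff] at h
      exact EReal.coe_ne_top _ h)
    exact ⟨j, d, hd, by rwa [hord, EReal.coe_le_coe_iff] at h⟩
  · rintro ⟨j, d, hd, hdr⟩
    exact (ordLV_le hd).trans (EReal.coe_le_coe_iff.mpr hdr)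

lemma ordLV_sub_add_le_ordL1_sub_iff (hw : ∀ i, 0 < w i) (Γ : ℝ)
    (a b : Fin q → MvPowerSeries (Fin n) k) (x y : MvPowerSeries (Fin n) k) :
    ordLV w (a - b) + Γ ≤ ordL1 w (x - y) ↔
      ∀ α, (∀ j β, Lval w β ≤ Lval w α - Γ → coeff β (a j) = coeff β (b j)) →
        coeff α x = coeff α y := by
  simp only [le_ordL1_iff, ordLV_add_le_iff hw, Pi.sub_apply, map_sub, ne_eq, sub_eq_zero]
  refine forall_congr' fun α => ⟨fun h hab => ?_, fun h hxy => ?_⟩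
  · by_contra hxy
    obtain ⟨j, β, hne, hβ⟩ := h hxy
    exact hne (hab j β hβ)
  · by_contra hab
    exact hxy (h fun j β hβ => not_not.mp fun hne => hab ⟨j, β, hne, hβ⟩)

end Order

theorem gamma_shifting_characterization_general
    {k : Type} [Field k] {n m : ℕ}
    (w : Fin n → ℝ) (hw : ∀ i, 0 < w i)
    (Γ : ℝ)
    (U : Set (Fin m → MvPowerSeries (Fin n) k))
    (H : TexData1 k n m) :
    (∀ a ∈ U, ∀ b ∈ U,
        ordLV w (a - b) + (Γ : EReal) ≤ ordL1 w (H.eval a - H.eval b))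
      ↔
    (∀ α : Fin n →₀ ℕ, ∀ a ∈ U, ∀ b ∈ U,
        (∀ (j : Fin m) (β : Fin n →₀ ℕ), Lval w β ≤ Lval w α - Γ →
          MvPowerSeries.coeff β (a j) = MvPowerSeries.coeff β (b j)) →
        MvPowerSeries.coeff α (H.eval a) = MvPowerSeries.coeff α (H.eval b)) := by
  simp only [ordLV_sub_add_le_ordL1_sub_iff hw]
  exact ⟨fun h α a ha b hb => h a ha b hb α, fun h a ha b hb α => h α a ha b hb⟩

/-- **Characterization of Γ-shifting textile maps.**
Let `L` be a positive linear form on `ℝⁿ`, `Γ ∈ L(ℤⁿ)`, `U = m^l·C^m`, and `h : U → C` a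
textile map. Then `h` is `Γ`-shifting on `U`, i.e. `ord_L(h a − h b) ≥ ord_L(a − b) + Γ` for
all `a, b ∈ U`, if and only if for every `α ∈ ℕⁿ` the coefficient `h_α` depends only on the
coefficients `c_ν` with `L·ν̄ ≤ L·α − Γ`. -/
theorem gamma_shifting_characterization
    {k : Type} [Field k] [CharZero k] {n m : ℕ} (l : ℕ)
    (w : Fin n → ℝ) (hw : ∀ i, 0 < w i)
    (Γ : ℝ) (hΓ : ∃ z : Fin n → ℤ, Γ = ∑ i, w i * (z i : ℝ))
    (U : Set (Fin m → MvPowerSeries (Fin n) k)) (hU : U = nbhd k n m l)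
    (H : TexData1 k n m) :
    (∀ a ∈ U, ∀ b ∈ U,
        ordLV w (a - b) + (Γ : EReal) ≤ ordL1 w (H.eval a - H.eval b))
      ↔
    (∀ α : Fin n →₀ ℕ, ∀ a ∈ U, ∀ b ∈ U,
        (∀ (j : Fin m) (β : Fin n →₀ ℕ), Lval w β ≤ Lval w α - Γ →
          MvPowerSeries.coeff β (a j) = MvPowerSeries.coeff β (b j)) →
        MvPowerSeries.coeff α (H.eval a) = MvPowerSeries.coeff α (H.eval b)) :=
  gamma_shifting_characterization_general w hw Γ U H
end
end

section
/- Sufficient criterion for contractiveness over a test-ring: Let A be a test-ring with maximal ideal n, U an m-adic neighbourhood of 0 in A_A^m (arcs over A, i.e. 1-cords), and h : U → A_A a textile map with h(0) = 0. Suppose that for each i ∈ ℕ the coefficient h_i decomposes as h_i = h'_i + h''_i, where h'_i is a polynomial in the variables x^j_l (1 ≤ j ≤ m, 0 ≤ l < i) with coefficients in A, and h''_i is a polynomial in the variables x^j_i (1 ≤ j ≤ m) with coefficients in n. Then h is contractive on U with respect to the refined order W(·), i.e. W(h(a) − h(b)) > W(a − b) for all a, b ∈ U. -/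
/- Sufficient criterion for contractiveness over a test-ring (arcs). -/

noncomputable section

/-- Evaluation of textile data for maps between arc spaces over `A`:
the `i`-th coefficient of the output is the polynomial `H i` evaluated at the
coefficients of the input. -/
def arcEval {A : Type} [CommRing A] {m : ℕ} (H : ℕ → MvPolynomial (Fin m × ℕ) A)
    (c : Fin m → ℕ → A) : ℕ → A :=
  fun i => MvPolynomial.eval (fun v : Fin m × ℕ => c v.1 v.2) (H i)

/-- The order of a vector of arcs, with values in `ℕ∞`. -/
def ordS {A : Type} [CommRing A] {q : ℕ} (c : Fin q → ℕ → A) : ℕ∞ :=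
  sInf {N : ℕ∞ | ∃ (j : Fin q) (i : ℕ), c j i ≠ 0 ∧ N = (i : ℕ∞)}

-- `pow(a)`: the largest `i` with `a ∈ 𝔫^i` for `a ≠ 0`, and `N` for `a = 0`.
open Classical in
def powIdx {A : Type} [CommRing A] (𝔫 : Ideal A) (N : ℕ) (a : A) : ℕ :=
  if a = 0 then N else sSup {i : ℕ | a ∈ 𝔫 ^ i}

/-- Second component of the refined order: `pow` of the lowest-order coefficient. -/
def powAtMin {A : Type} [CommRing A] (𝔫 : Ideal A) (N : ℕ) {q : ℕ}
    (c : Fin q → ℕ → A) : ℕ :=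
  sInf {e : ℕ | ∃ (j : Fin q) (i : ℕ), c j i ≠ 0 ∧ (i : ℕ∞) = ordS c ∧
    e = powIdx 𝔫 N (c j i)}

/-- The refined order `W(c) = (ord c, pow(c_{ord c}))`. -/
def WOrd {A : Type} [CommRing A] (𝔫 : Ideal A) (N : ℕ) {q : ℕ}
    (c : Fin q → ℕ → A) : ℕ∞ × ℕ :=
  (ordS c, powAtMin 𝔫 N c)

/-- Lexicographic comparison on `ℕ∞ × ℕ`. -/
def refLt (x y : ℕ∞ × ℕ) : Prop :=
  x.1 < y.1 ∨ (x.1 = y.1 ∧ x.2 < y.2)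

/-- The `m`-adic neighbourhood `m^l · A_A^q` of `0` in the space of vectors of arcs. -/
def nbhdArc (A : Type) [CommRing A] (q l : ℕ) : Set (Fin q → ℕ → A) :=
  {c | ∀ (j : Fin q) (i : ℕ), i < l → c j i = 0}

/-! Let `n = ord (a - b)` and `e = pow` of its lowest coefficients, so that every `(a - b)_n`
lies in `𝔫 ^ e`. A polynomial with coefficients in an ideal `I`, evaluated at two points whose
coordinates differ by elements of `J`, changes by an element of `I * J`. Applied to the splitting
`h_i = h'_i + h''_i`, this shows that `h(a) - h(b)` vanishes below `n` (there `a` and `b` agree on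
every variable in sight) and that its `n`-th coefficient lies in `𝔫 · 𝔫 ^ e = 𝔫 ^ (e + 1)`: the
difference of the `h'_n` vanishes, and `h''_n` has coefficients in `𝔫`. Hence either the order
of `h(a) - h(b)` exceeds `n`, or it equals `n` and its `pow` is at least `e + 1`. -/

namespace MvPolynomial

theorem eval_sub_eval_mem_mul {σ R : Type*} [CommRing R] {I J : Ideal R}
    {p : MvPolynomial σ R} (hp : ∀ d, p.coeff d ∈ I) {f g : σ → R}
    (hfg : ∀ v ∈ p.vars, f v - g v ∈ J) :
    eval f p - eval g p ∈ I * J := by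
  classical
  rw [eval_eq, eval_eq, ← Finset.sum_sub_distrib]
  refine Ideal.sum_mem _ fun d hd => ?_
  rw [← mul_sub]
  refine Ideal.mul_mem_mul (hp d) ?_
  rw [← Ideal.Quotient.eq, map_prod, map_prod]
  refine Finset.prod_congr rfl fun v hv => ?_
  have hv' : v ∈ p.vars := (mem_vars_iff_mem_support v).mpr ⟨d, hd, hv⟩
  rw [map_pow, map_pow, Ideal.Quotient.eq.mpr (hfg v hv')]

end MvPolynomial

section RefinedOrder

variable {A : Type} [CommRing A] {q : ℕ}

theorem le_ordS_iff {c : Fin q → ℕ → A} {n : ℕ} :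
    (n : ℕ∞) ≤ ordS c ↔ ∀ i < n, ∀ j, c j i = 0 := by
  simp only [ordS, le_sInf_iff, Set.mem_ofPred_eq]
  constructor
  · intro h i hi j
    by_contra hne
    exact absurd (h _ ⟨j, i, hne, rfl⟩) (by exact_mod_cast hi.not_ge)
  · rintro h _ ⟨j, i, hne, rfl⟩
    by_contra hlt
    exact hne (h i (by exact_mod_cast not_le.mp hlt) j)

theorem ordS_le_of_ne_zero {c : Fin q → ℕ → A} {j : Fin q} {i : ℕ} (h : c j i ≠ 0) :
    ordS c ≤ i :=
  sInf_le ⟨j, i, h, rfl⟩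

theorem ordS_ne_top {c : Fin q → ℕ → A} (hc : c ≠ 0) : ordS c ≠ ⊤ := by
  obtain ⟨j, hj⟩ := Function.ne_iff.mp hc
  obtain ⟨i, hi⟩ := Function.ne_iff.mp hj
  exact ne_top_of_le_ne_top (ENat.natCast_ne_top i) (ordS_le_of_ne_zero hi)

variable {𝔫 : Ideal A} {N : ℕ}

theorem bddAbove_setOf_mem_pow (hN : 𝔫 ^ N = ⊥) {a : A} (ha : a ≠ 0) :
    BddAbove {i : ℕ | a ∈ 𝔫 ^ i} := by
  refine ⟨N, fun i hi => ?_⟩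
  by_contra hlt
  exact ha (by simpa [hN] using Ideal.pow_le_pow_right (not_le.mp hlt).le hi)

theorem mem_pow_powIdx (hN : 𝔫 ^ N = ⊥) {a : A} (ha : a ≠ 0) : a ∈ 𝔫 ^ powIdx 𝔫 N a := by
  rw [powIdx, if_neg ha]
  exact Nat.sSup_mem ⟨0, by simp⟩ (bddAbove_setOf_mem_pow hN ha)

theorem le_powIdx (hN : 𝔫 ^ N = ⊥) {a : A} (ha : a ≠ 0) {e : ℕ} (he : a ∈ 𝔫 ^ e) :
    e ≤ powIdx 𝔫 N a := by
  rw [powIdx, if_neg ha]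
  exact le_csSup (bddAbove_setOf_mem_pow hN ha) he

theorem mem_pow_powAtMin (hN : 𝔫 ^ N = ⊥) {c : Fin q → ℕ → A} {n : ℕ} (hc : ordS c = n)
    (j : Fin q) : c j n ∈ 𝔫 ^ powAtMin 𝔫 N c := by
  by_cases h : c j n = 0
  · simp [h]
  · have hle : powAtMin 𝔫 N c ≤ powIdx 𝔫 N (c j n) := Nat.sInf_le ⟨j, n, h, hc.symm, rfl⟩
    exact Ideal.pow_le_pow_right hle (mem_pow_powIdx hN h)

theorem le_powAtMin (hN : 𝔫 ^ N = ⊥) {c : Fin q → ℕ → A} {n : ℕ} {j : Fin q}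
    (hj : c j n ≠ 0) (hc : ordS c = n) {e : ℕ} (he : ∀ j, c j n ∈ 𝔫 ^ e) :
    e ≤ powAtMin 𝔫 N c := by
  rw [powAtMin]
  refine le_csInf ⟨_, j, n, hj, hc.symm, rfl⟩ ?_
  rintro _ ⟨j', i, hne, hi, rfl⟩
  obtain rfl : i = n := by exact_mod_cast hi.trans hc
  exact le_powIdx hN hne (he j')

theorem refLt_WOrd_of_mem_pow_succ (hN : 𝔫 ^ N = ⊥) {r : ℕ} {c : Fin q → ℕ → A}
    {d : Fin r → ℕ → A} {n : ℕ} (hc : ordS c = n) (hd : ∀ i < n, ∀ j, d j i = 0)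
    (hdn : ∀ j, d j n ∈ 𝔫 ^ (powAtMin 𝔫 N c + 1)) :
    refLt (WOrd 𝔫 N c) (WOrd 𝔫 N d) := by
  by_cases hzero : ∀ j, d j n = 0
  · have hlt : ((n + 1 : ℕ) : ℕ∞) ≤ ordS d :=
      le_ordS_iff.mpr fun i hi => (Nat.lt_succ_iff_lt_or_eq.mp hi).elim (hd i) (· ▸ hzero)
    left
    change ordS c < ordS d
    rw [hc]
    exact lt_of_lt_of_le (by exact_mod_cast n.lt_succ_self) hlt
  · push Not at hzero
    obtain ⟨j, hj⟩ := hzero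
    have hord : ordS d = n := le_antisymm (ordS_le_of_ne_zero hj) (le_ordS_iff.mpr hd)
    exact Or.inr ⟨hc.trans hord.symm, Nat.lt_of_succ_le (le_powAtMin hN hj hord hdn)⟩

end RefinedOrder

theorem arcEval_sub_arcEval_mem_mul {A : Type} [CommRing A] {m : ℕ} {I J : Ideal A}
    {H : ℕ → MvPolynomial (Fin m × ℕ) A}
    (hsplit : ∀ i : ℕ, ∃ P Q : MvPolynomial (Fin m × ℕ) A,
      H i = P + Q ∧ (∀ v ∈ P.vars, v.2 < i) ∧ (∀ v ∈ Q.vars, v.2 = i) ∧ (∀ d, Q.coeff d ∈ I))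
    {a b : Fin m → ℕ → A} {i : ℕ} (hlt : ∀ l < i, ∀ j, (a - b) j l = 0)
    (hi : ∀ j, (a - b) j i ∈ J) :
    arcEval H a i - arcEval H b i ∈ I * J := by
  obtain ⟨P, Q, hPQ, hP, hQ, hQI⟩ := hsplit i
  have hP' : MvPolynomial.eval (fun v => a v.1 v.2) P - MvPolynomial.eval (fun v => b v.1 v.2) P
      ∈ (⊤ : Ideal A) * ⊥ :=
    MvPolynomial.eval_sub_eval_mem_mul (fun _ => Submodule.mem_top) fun v hv => by
      simpa using hlt v.2 (hP v hv) v.1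
  have hQ' : MvPolynomial.eval (fun v => a v.1 v.2) Q - MvPolynomial.eval (fun v => b v.1 v.2) Q
      ∈ I * J :=
    MvPolynomial.eval_sub_eval_mem_mul hQI fun v hv => by simpa [hQ v hv] using hi v.1
  rw [Ideal.mul_bot, Ideal.mem_bot] at hP'
  simp only [arcEval, hPQ, map_add]
  rwa [add_sub_add_comm, hP', zero_add]

theorem contractive_criterion_test_ring_general
    {A : Type} [CommRing A] [IsLocalRing A]
    (N : ℕ) (hN : (IsLocalRing.maximalIdeal A) ^ N = ⊥)
    {m : ℕ}
    (U : Set (Fin m → ℕ → A))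
    (H : ℕ → MvPolynomial (Fin m × ℕ) A)
    (hsplit : ∀ i : ℕ, ∃ P Q : MvPolynomial (Fin m × ℕ) A,
      H i = P + Q ∧
      (∀ v ∈ P.vars, v.2 < i) ∧
      (∀ v ∈ Q.vars, v.2 = i) ∧
      (∀ d, Q.coeff d ∈ IsLocalRing.maximalIdeal A)) :
    ∀ a ∈ U, ∀ b ∈ U, a ≠ b →
      refLt (WOrd (IsLocalRing.maximalIdeal A) N (a - b))
            (WOrd (IsLocalRing.maximalIdeal A) N
              (fun _ : Fin 1 => arcEval H a - arcEval H b)) := by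
  intro a _ b _ hab
  obtain ⟨n, hn⟩ := ENat.ne_top_iff_exists.mp (ordS_ne_top (sub_ne_zero.mpr hab))
  have hvanish : ∀ l < n, ∀ j, (a - b) j l = 0 := le_ordS_iff.mp hn.le
  refine refLt_WOrd_of_mem_pow_succ hN hn.symm (fun i hi _ => ?_) fun _ => ?_
  · have hmem := arcEval_sub_arcEval_mem_mul (J := ⊥) hsplit
      (fun l hl => hvanish l (hl.trans hi)) fun j => Ideal.mem_bot.mpr (hvanish i hi j)
    rwa [Ideal.mul_bot, Ideal.mem_bot] at hmem
  · rw [pow_succ']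
    exact arcEval_sub_arcEval_mem_mul hsplit hvanish (mem_pow_powAtMin hN hn.symm)

/-- **Sufficient criterion for contractiveness over a test-ring.**
Let `A` be a test-ring with maximal ideal `𝔫`, `U` an `m`-adic neighbourhood of `0` in
`A_A^m`, and `h : U → A_A` a textile map with `h 0 = 0` whose `i`-th coefficient decomposes
as `h_i = h'_i + h''_i`, with `h'_i` a polynomial (coefficients in `A`) in the variables
`x^j_l` with `l < i`, and `h''_i` a polynomial with coefficients in `𝔫` in the variables
`x^j_i`. Then `h` is contractive on `U` with respect to the refined order `W(·)`. -/
theorem contractive_criterion_test_ring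
    {k : Type} [Field k] [CharZero k]
    {A : Type} [CommRing A] [Algebra k A] [IsLocalRing A]
    (N : ℕ) (hN : (IsLocalRing.maximalIdeal A) ^ N = ⊥)
    {m : ℕ} (l : ℕ)
    (U : Set (Fin m → ℕ → A)) (hU : U = nbhdArc A m l)
    (H : ℕ → MvPolynomial (Fin m × ℕ) A)
    (h0 : arcEval H 0 = 0)
    (hsplit : ∀ i : ℕ, ∃ P Q : MvPolynomial (Fin m × ℕ) A,
      H i = P + Q ∧
      (∀ v ∈ P.vars, v.2 < i) ∧
      (∀ v ∈ Q.vars, v.2 = i) ∧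
      (∀ d, Q.coeff d ∈ IsLocalRing.maximalIdeal A)) :
    ∀ a ∈ U, ∀ b ∈ U, a ≠ b →
      refLt (WOrd (IsLocalRing.maximalIdeal A) N (a - b))
            (WOrd (IsLocalRing.maximalIdeal A) N
              (fun _ : Fin 1 => arcEval H a - arcEval H b)) :=
  contractive_criterion_test_ring_general N hN U H hsplit
end
end

section
/- Canonical form for textile linear maps on arc space: Every textile linear map ℓ : A → A (equivalently, every ℕ²-matrix (ℓ_{ij})_{i,j∈ℕ} over k each of whose rows has only finitely many nonzero entries) is equivalent to a textile linear map in canonical form: there exist invertible textile linear maps P, Q : A → A (with textile linear inverses) such that the matrix of P∘ℓ∘Q has at most one nonzero entry in each row and at most one nonzero entry in each column. -/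
/- Canonical form for textile linear maps on arc space. -/

noncomputable section

/-- An `ℕ²`-matrix is row-finite if every row has finitely many nonzero entries; such
matrices correspond exactly to textile linear maps `A → A` on the arc space `A = k^ℕ`. -/
def RowFinite {k : Type} [Field k] (M : ℕ → ℕ → k) : Prop :=
  ∀ i, {j | M i j ≠ 0}.Finite

/-- The textile linear map associated to a row-finite `ℕ²`-matrix. -/
def mApply {k : Type} [Field k] (M : ℕ → ℕ → k) (a : ℕ → k) : ℕ → k :=
  fun i => ∑ᶠ j, M i j * a j

/-- A matrix is in canonical form if every row and every column contains at most one
nonzero entry. -/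
def CanonicalForm {k : Type} [Field k] (N : ℕ → ℕ → k) : Prop :=
  (∀ i j j', N i j ≠ 0 → N i j' ≠ 0 → j = j') ∧
  (∀ j i i', N i j ≠ 0 → N i' j ≠ 0 → i = i')

/-! Write `V = ℕ →₀ k`. A row-finite matrix is `rowMatrix f` for an endomorphism `f` of `V`
(row `i` is `f eᵢ`), and `mApply (rowMatrix f)` is the transpose of `f` acting on `k^ℕ`, the
dual of `V`. Extend a basis of `ker f` to a basis `b` of `V`; the images of the new vectors of `b`
are independent, so they extend to a basis `c` of `V`. In the bases `b` and `c` the matrix of `f`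
has at most one nonzero entry in each row and column, and since both bases are countably
infinite they can be indexed by `ℕ`, which turns the changes of basis into `P` and `Q`. -/

open Finsupp Module

universe u v

theorem Module.Basis.sumExtend_inl {K V ι : Type*} [DivisionRing K] [AddCommGroup V]
    [Module K V] {v : ι → V} (hv : LinearIndependent K v) (i : ι) :
    Basis.sumExtend hv (.inl i) = v i := by
  classical
  simp only [Basis.sumExtend, Basis.coe_reindex, Basis.coe_extend, Function.comp_apply]
  -- `sumExtendIndex hv` is the set difference used inside `sumExtend` only up to unfolding
  erw [Equiv.symm_symm, Equiv.trans_apply, Equiv.sumCongr_apply, Sum.map_inl,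
    Equiv.Set.sumDiffSubset_apply_inl]
  rfl

theorem LinearMap.exists_basis_rank_normal_form {K : Type*} {V : Type u} {V' : Type v}
    [DivisionRing K] [AddCommGroup V] [Module K V] [AddCommGroup V'] [Module K V']
    (f : V →ₗ[K] V') :
    ∃ (ι₁ ι₂ : Type u) (ι₃ : Type v) (b : Basis (ι₁ ⊕ ι₂) K V) (c : Basis (ι₂ ⊕ ι₃) K V'),
      (∀ x, f (b (.inl x)) = 0) ∧ ∀ y, f (b (.inr y)) = c (.inl y) := by
  let bK := Basis.ofVectorSpace K (ker f)
  have hK : LinearIndependent K ((ker f).subtype ∘ bK) :=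
    bK.linearIndependent.map' _ (Submodule.ker_subtype _)
  let b := Basis.sumExtend hK
  have hb_inl : b ∘ .inl = (ker f).subtype ∘ bK := funext (Basis.sumExtend_inl hK)
  have hb_ker : Submodule.span K (Set.range (b ∘ .inl)) = ker f := by
    rw [hb_inl, Set.range_comp, Submodule.span_image, bK.span_eq, Submodule.map_top,
      Submodule.range_subtype]
  have hfb : LinearIndependent K (f ∘ b ∘ .inr) := by
    refine (b.linearIndependent.comp _ Sum.inr_injective).map ?_
    simpa only [hb_ker] using (linearIndependent_sum.1 b.linearIndependent).2.2.symm
  refine ⟨_, _, _, b, Basis.sumExtend hfb, fun x => ?_, fun y => ?_⟩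
  · have hx : b (.inl x) = bK x := congrFun hb_inl x
    exact hx ▸ (bK x).2
  · exact (Basis.sumExtend_inl hfb y).symm

section RowMatrix

variable {k : Type} [Field k]

def rowMatrix (g : (ℕ →₀ k) →ₗ[k] ℕ →₀ k) : ℕ → ℕ → k := fun i j => g (single i 1) j

theorem rowFinite_rowMatrix (g : (ℕ →₀ k) →ₗ[k] ℕ →₀ k) : RowFinite (rowMatrix g) :=
  fun i => (g (single i 1)).hasFiniteSupport

theorem RowFinite.exists_rowMatrix_eq {M : ℕ → ℕ → k} (hM : RowFinite M) :
    ∃ g : (ℕ →₀ k) →ₗ[k] ℕ →₀ k, rowMatrix g = M :=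
  ⟨linearCombination k fun i => ofSupportFinite (M i) (hM i), by
    ext i j; simp only [rowMatrix, linearCombination_single, one_smul]; rfl⟩

theorem mApply_rowMatrix (g : (ℕ →₀ k) →ₗ[k] ℕ →₀ k) (a : ℕ → k) :
    mApply (rowMatrix g) a = fun i => linearCombination k a (g (single i 1)) := by
  ext i
  rw [mApply, linearCombination_apply, Finsupp.sum,
    finsum_eq_sum_of_support_subset (s := (g (single i 1)).support) _ fun j hj => ?_]
  · simp only [rowMatrix, smul_eq_mul]
  · exact mem_support_iff.2 (left_ne_zero_of_mul hj)

theorem mApply_rowMatrix_rowMatrix (g h : (ℕ →₀ k) →ₗ[k] ℕ →₀ k) (a : ℕ → k) :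
    mApply (rowMatrix g) (mApply (rowMatrix h) a) = mApply (rowMatrix (h ∘ₗ g)) a := by
  have : linearCombination k (mApply (rowMatrix h) a) = linearCombination k a ∘ₗ h := by
    ext j
    simp [mApply_rowMatrix]
  rw [mApply_rowMatrix g, this]
  simp only [mApply_rowMatrix, LinearMap.comp_apply]

theorem mApply_rowMatrix_id (a : ℕ → k) : mApply (rowMatrix LinearMap.id) a = a := by
  ext i
  simp [mApply_rowMatrix]

theorem mApply_rowMatrix_symm (p : (ℕ →₀ k) ≃ₗ[k] ℕ →₀ k) (a : ℕ → k) :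
    mApply (rowMatrix p) (mApply (rowMatrix p.symm) a) = a := by
  rw [mApply_rowMatrix_rowMatrix, LinearEquiv.comp_coe, p.self_trans_symm,
    LinearEquiv.refl_toLinearMap, mApply_rowMatrix_id]

theorem canonicalForm_of_ne_zero {α β γ : Type*} {N : ℕ → ℕ → k}
    {u : ℕ → α ⊕ β} {v : ℕ → β ⊕ γ} (hu : Function.Injective u) (hv : Function.Injective v)
    (h : ∀ i j, N i j ≠ 0 → ∃ y, u i = .inr y ∧ v j = .inl y) : CanonicalForm N := by
  constructor
  · intro i j j' hj hj'
    obtain ⟨y, hi, hj⟩ := h i j hj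
    obtain ⟨y', hi', hj'⟩ := h i j' hj'
    obtain rfl : y = y' := Sum.inr_injective (hi.symm.trans hi')
    exact hv (hj.trans hj'.symm)
  · intro j i i' hi hi'
    obtain ⟨y, hi, hj⟩ := h i j hi
    obtain ⟨y', hi', hj'⟩ := h i' j hi'
    obtain rfl : y = y' := Sum.inl_injective (hj.symm.trans hj')
    exact hu (hi.trans hi'.symm)

theorem canonicalForm_rowMatrix_reindex {ι₁ ι₂ ι₃ : Type*}
    (f : (ℕ →₀ k) →ₗ[k] ℕ →₀ k) (b : Basis (ι₁ ⊕ ι₂) k (ℕ →₀ k))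
    (c : Basis (ι₂ ⊕ ι₃) k (ℕ →₀ k)) (hker : ∀ x, f (b (.inl x)) = 0)
    (him : ∀ y, f (b (.inr y)) = c (.inl y)) (e₁ : ι₁ ⊕ ι₂ ≃ ℕ) (e₂ : ι₂ ⊕ ι₃ ≃ ℕ) :
    CanonicalForm (rowMatrix ((c.reindex e₂).repr.toLinearMap ∘ₗ f ∘ₗ
      (b.reindex e₁).repr.symm.toLinearMap)) := by
  refine canonicalForm_of_ne_zero e₁.symm.injective e₂.symm.injective fun i j hij => ?_
  simp only [rowMatrix, LinearMap.comp_apply, LinearEquiv.coe_coe, Basis.repr_symm_single_one,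
    Basis.reindex_apply, Basis.repr_reindex_apply] at hij
  rcases hi : e₁.symm i with x | y <;> rw [hi] at hij
  · simp [hker] at hij
  · rw [him, Basis.repr_self, single_apply_ne_zero] at hij
    exact ⟨y, rfl, hij.1⟩

end RowMatrix

theorem canonical_form_textile_linear_general
    {k : Type} [Field k]
    (M : ℕ → ℕ → k) (hM : RowFinite M) :
    ∃ P Pinv Q Qinv N : ℕ → ℕ → k,
      RowFinite P ∧ RowFinite Pinv ∧ RowFinite Q ∧ RowFinite Qinv ∧ RowFinite N ∧
      (∀ a, mApply P (mApply Pinv a) = a) ∧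
      (∀ a, mApply Pinv (mApply P a) = a) ∧
      (∀ a, mApply Q (mApply Qinv a) = a) ∧
      (∀ a, mApply Qinv (mApply Q a) = a) ∧
      (∀ a, mApply P (mApply M (mApply Q a)) = mApply N a) ∧
      CanonicalForm N := by
  obtain ⟨f, rfl⟩ := hM.exists_rowMatrix_eq
  obtain ⟨ι₁, ι₂, ι₃, b, c, hker, him⟩ := f.exists_basis_rank_normal_form
  let e₁ := b.indexEquiv (Finsupp.basisSingleOne : Basis ℕ k (ℕ →₀ k))
  let e₂ := c.indexEquiv (Finsupp.basisSingleOne : Basis ℕ k (ℕ →₀ k))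
  let p := (b.reindex e₁).repr.symm
  let q := (c.reindex e₂).repr
  refine ⟨rowMatrix p, rowMatrix p.symm, rowMatrix q, rowMatrix q.symm,
    rowMatrix (q.toLinearMap ∘ₗ f ∘ₗ p.toLinearMap), rowFinite_rowMatrix _,
    rowFinite_rowMatrix _, rowFinite_rowMatrix _, rowFinite_rowMatrix _, rowFinite_rowMatrix _,
    mApply_rowMatrix_symm p, by simpa using mApply_rowMatrix_symm p.symm,
    mApply_rowMatrix_symm q, by simpa using mApply_rowMatrix_symm q.symm, fun a => ?_,
    canonicalForm_rowMatrix_reindex f b c hker him e₁ e₂⟩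
  rw [mApply_rowMatrix_rowMatrix, mApply_rowMatrix_rowMatrix]

/-- **Canonical form for textile linear maps on arc space.**
Every textile linear map `ℓ : A → A` (i.e. every row-finite `ℕ²`-matrix over `k`) is
equivalent to a textile linear map in canonical form: there exist invertible textile linear
maps `P, Q` (with textile linear inverses) such that `P∘ℓ∘Q` is given by a row-finite matrix
with at most one nonzero entry in each row and in each column. -/
theorem canonical_form_textile_linear
    {k : Type} [Field k] [CharZero k]
    (M : ℕ → ℕ → k) (hM : RowFinite M) :
    ∃ P Pinv Q Qinv N : ℕ → ℕ → k,
      RowFinite P ∧ RowFinite Pinv ∧ RowFinite Q ∧ RowFinite Qinv ∧ RowFinite N ∧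
      (∀ a, mApply P (mApply Pinv a) = a) ∧
      (∀ a, mApply Pinv (mApply P a) = a) ∧
      (∀ a, mApply Q (mApply Qinv a) = a) ∧
      (∀ a, mApply Qinv (mApply Q a) = a) ∧
      (∀ a, mApply P (mApply M (mApply Q a)) = mApply N a) ∧
      CanonicalForm N :=
  canonical_form_textile_linear_general M hM
end
end

section
/- Linearization of quasi-submersions: Let f : U → C^p be a textile map on an m-adic neighbourhood U = m^l·C^m of 0 with f(0) = 0, written f = ℓ + h with ℓ = T_0 f. Assume f is a quasi-submersion, i.e. im(h) ⊆ im(ℓ), and that ℓ admits a scission σ such that σ∘h is contractive on U. Then u = id + σ∘h is a bijection of U onto itself and f = ℓ ∘ u on U; in particular f(U) = ℓ(U). -/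
/- Linearization of quasi-submersions. -/

noncomputable section

open MvPowerSeries

/-- The tangent map `T_a f · v = Σ_ν ∂_ν f(a) · v_ν` of a textile map, obtained by
coefficientwise partial differentiation of the defining polynomials. -/
def TexData.tangent {k : Type} [Field k] {n q p : ℕ} (F : TexData k n q p)
    (a v : Fin q → MvPowerSeries (Fin n) k) : Fin p → MvPowerSeries (Fin n) k :=
  fun j => (fun d => ∑ᶠ ν : Fin q × (Fin n →₀ ℕ),
    MvPolynomial.eval (cf a) (MvPolynomial.pderiv ν (F (j, d))) * cf v ν : (Fin n →₀ ℕ) → k)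

/-! Since `σ ∘ h` is contractive and vanishes at `0`, it maps `U = m^l·C^m` into itself and
`u = id + σ ∘ h` is injective on `U`. For `c ∈ U`, the iterates of `a ↦ c - σ h(a)` starting at
`0` have consecutive differences of strictly increasing order, so they converge `m`-adically to
a solution of `u(a) = c`. Finally `h` takes values in `im ℓ` and `ℓ σ ℓ = ℓ`, so `ℓ σ h = h` and
`f = ℓ + h = ℓ ∘ u`, whence `f(U) = ℓ(u(U)) = ℓ(U)`. -/

namespace Cords

variable {k : Type} [Field k] {n q : ℕ}

def nbhdAddSubgroup (k : Type) [Field k] (n q l : ℕ) :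
    AddSubgroup (Fin q → MvPowerSeries (Fin n) k) where
  carrier := nbhd k n q l
  add_mem' ha hb j d hd := by simp [ha j d hd, hb j d hd]
  zero_mem' j d _ := by simp
  neg_mem' ha j d hd := by simp [ha j d hd]

lemma add_mem_nbhd {l : ℕ} {a b : Fin q → MvPowerSeries (Fin n) k}
    (ha : a ∈ nbhd k n q l) (hb : b ∈ nbhd k n q l) : a + b ∈ nbhd k n q l :=
  (nbhdAddSubgroup k n q l).add_mem ha hb

lemma zero_mem_nbhd (l : ℕ) : (0 : Fin q → MvPowerSeries (Fin n) k) ∈ nbhd k n q l :=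
  (nbhdAddSubgroup k n q l).zero_mem

lemma sub_mem_nbhd {l : ℕ} {a b : Fin q → MvPowerSeries (Fin n) k}
    (ha : a ∈ nbhd k n q l) (hb : b ∈ nbhd k n q l) : a - b ∈ nbhd k n q l :=
  (nbhdAddSubgroup k n q l).sub_mem ha hb

lemma nbhd_zero : nbhd k n q 0 = Set.univ :=
  Set.eq_univ_of_forall fun _ _ _ hd => absurd hd (Nat.not_lt_zero _)

lemma nbhd_antitone : Antitone (nbhd k n q) :=
  fun _ _ hll' _ ha j d hd => ha j d (hd.trans_le hll')

lemma eq_zero_of_forall_mem_nbhd {a : Fin q → MvPowerSeries (Fin n) k}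
    (ha : ∀ N, a ∈ nbhd k n q N) : a = 0 := by
  funext j
  ext d
  exact ha _ j d (Nat.lt_succ_self _)

lemma mem_nbhd_iff_le_ordV {l : ℕ} {a : Fin q → MvPowerSeries (Fin n) k} :
    a ∈ nbhd k n q l ↔ (l : ℕ∞) ≤ ordV a := by
  simp only [ordV, le_sInf_iff, Set.mem_ofPred_eq]
  constructor
  · rintro ha _ ⟨j, d, hd, rfl⟩
    by_contra! hlt
    exact hd (ha j d (by exact_mod_cast hlt))
  · intro ha j d hd
    by_contra hne
    exact absurd (ha _ ⟨j, d, hne, rfl⟩) (by exact_mod_cast hd.not_ge)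

lemma ordV_neg (a : Fin q → MvPowerSeries (Fin n) k) : ordV (-a) = ordV a := by
  simp only [ordV, Pi.neg_apply, map_neg, neg_ne_zero]

/-- The coefficient of degree `d` is read at index `|d| + 1`, from where it is constant when
`s (K + 1) - s K ∈ nbhd k n q K` for all `K`. -/
def cordLimit (s : ℕ → Fin q → MvPowerSeries (Fin n) k) : Fin q → MvPowerSeries (Fin n) k :=
  fun j => (fun d => MvPowerSeries.coeff d (s ((d.sum fun _ e => e) + 1) j) :
    (Fin n →₀ ℕ) → k)

section Cauchy

variable {s : ℕ → Fin q → MvPowerSeries (Fin n) k}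

lemma sub_mem_nbhd_of_le (hs : ∀ K, s (K + 1) - s K ∈ nbhd k n q K) {N i : ℕ}
    (hi : N ≤ i) : s i - s N ∈ nbhd k n q N := by
  induction i, hi using Nat.le_induction with
  | base => simpa using zero_mem_nbhd N
  | succ i hNi ih =>
    rw [← sub_add_sub_cancel _ (s i)]
    exact add_mem_nbhd (nbhd_antitone hNi (hs i)) ih

lemma cordLimit_sub_mem_nbhd (hs : ∀ K, s (K + 1) - s K ∈ nbhd k n q K)
    (K : ℕ) : cordLimit s - s K ∈ nbhd k n q K := by
  intro j d hd
  let D := (d.sum fun _ e => e) + 1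
  have hD := sub_mem_nbhd_of_le hs (le_max_left D K) j d (Nat.lt_succ_self _)
  have hK := sub_mem_nbhd_of_le hs (le_max_right D K) j d hd
  simp only [Pi.sub_apply, map_sub, sub_eq_zero] at hD hK ⊢
  exact hD.symm.trans hK

end Cauchy

def ContractiveOn (h : (Fin q → MvPowerSeries (Fin n) k) → Fin q → MvPowerSeries (Fin n) k)
    (U : Set (Fin q → MvPowerSeries (Fin n) k)) : Prop :=
  ∀ a ∈ U, ∀ b ∈ U, a ≠ b → ordV (a - b) < ordV (h a - h b)

namespace ContractiveOn

variable {h : (Fin q → MvPowerSeries (Fin n) k) → Fin q → MvPowerSeries (Fin n) k}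
  {U : Set (Fin q → MvPowerSeries (Fin n) k)}

lemma sub_mem_nbhd_succ (hh : ContractiveOn h U) {a b : Fin q → MvPowerSeries (Fin n) k}
    (ha : a ∈ U) (hb : b ∈ U) {N : ℕ} (hab : a - b ∈ nbhd k n q N) :
    h a - h b ∈ nbhd k n q (N + 1) := by
  obtain rfl | hne := eq_or_ne a b
  · simpa using zero_mem_nbhd (N + 1)
  rw [mem_nbhd_iff_le_ordV] at hab ⊢
  exact_mod_cast Order.add_one_le_of_lt (hab.trans_lt (hh a ha b hb hne))

lemma const_sub (hh : ContractiveOn h U) (c : Fin q → MvPowerSeries (Fin n) k) :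
    ContractiveOn (fun a => c - h a) U := by
  intro a ha b hb hne
  simpa [← ordV_neg (h a - h b)] using hh a ha b hb hne

lemma injOn_add_self (hh : ContractiveOn h U) : Set.InjOn (fun a => a + h a) U := by
  intro a ha b hb hab
  by_contra hne
  have hdiff : h a - h b = -(a - b) := by
    simp only at hab
    rw [neg_sub, sub_eq_sub_iff_add_eq_add, add_comm, hab]
  have hlt := hh a ha b hb hne
  rw [hdiff, ordV_neg] at hlt
  exact lt_irrefl _ hlt

variable {l : ℕ}

lemma exists_fixedPoint (hh : ContractiveOn h (nbhd k n q l))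
    (hmaps : Set.MapsTo h (nbhd k n q l) (nbhd k n q l)) :
    ∃ a ∈ nbhd k n q l, h a = a := by
  obtain ⟨s, hs0, hsucc⟩ : ∃ s : ℕ → Fin q → MvPowerSeries (Fin n) k,
      s 0 = 0 ∧ ∀ K, s (K + 1) = h (s K) :=
    ⟨fun K => h^[K] 0, rfl, fun K => Function.iterate_succ_apply' h K 0⟩
  have hsU : ∀ K, s K ∈ nbhd k n q l := by
    intro K
    induction K with
    | zero => simpa [hs0] using zero_mem_nbhd l
    | succ K ih => simpa [hsucc] using hmaps ih
  have hs : ∀ K, s (K + 1) - s K ∈ nbhd k n q K := by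
    intro K
    induction K with
    | zero => simp [nbhd_zero]
    | succ K ih =>
      have hstep := hh.sub_mem_nbhd_succ (hsU (K + 1)) (hsU K) ih
      rwa [← hsucc, ← hsucc] at hstep
  have haU : cordLimit s ∈ nbhd k n q l := by
    simpa using add_mem_nbhd (cordLimit_sub_mem_nbhd hs l) (hsU l)
  refine ⟨cordLimit s, haU, sub_eq_zero.mp (eq_zero_of_forall_mem_nbhd fun N => ?_)⟩
  cases N with
  | zero => simp [nbhd_zero]
  | succ K =>
    have hstep := sub_mem_nbhd (hh.sub_mem_nbhd_succ haU (hsU K) (cordLimit_sub_mem_nbhd hs K))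
      (cordLimit_sub_mem_nbhd hs (K + 1))
    rwa [hsucc, sub_sub_sub_cancel_right] at hstep

lemma bijOn_add_self (hh : ContractiveOn h (nbhd k n q l)) (h0 : h 0 = 0) :
    Set.BijOn (fun a => a + h a) (nbhd k n q l) (nbhd k n q l) := by
  have hmaps : Set.MapsTo h (nbhd k n q l) (nbhd k n q l) := by
    intro a ha
    have hha := hh.sub_mem_nbhd_succ ha (zero_mem_nbhd l) (by simpa using ha)
    rw [h0, sub_zero] at hha
    exact nbhd_antitone l.le_succ hha
  refine ⟨fun a ha => add_mem_nbhd ha (hmaps ha), hh.injOn_add_self, fun c hc => ?_⟩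
  obtain ⟨a, ha, hfix⟩ :=
    (hh.const_sub c).exists_fixedPoint fun a ha => sub_mem_nbhd hc (hmaps ha)
  exact ⟨a, ha, eq_sub_iff_add_eq.mp hfix.symm⟩

end ContractiveOn

end Cords

namespace TexData

variable {k : Type} [Field k] {n q p : ℕ}

lemma coeff_tangent (F : TexData k n q p) (a v : Fin q → MvPowerSeries (Fin n) k) (j : Fin p)
    (d : Fin n →₀ ℕ) :
    MvPowerSeries.coeff d (F.tangent a v j) = ∑ᶠ ν : Fin q × (Fin n →₀ ℕ),
      MvPolynomial.eval (cf a) (MvPolynomial.pderiv ν (F (j, d))) * cf v ν := rfl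

lemma tangent_zero_right (F : TexData k n q p) (a : Fin q → MvPowerSeries (Fin n) k) :
    F.tangent a 0 = 0 := by
  funext j
  ext d
  simp [coeff_tangent, cf]

lemma tangent_add_right (F : TexData k n q p) (a x y : Fin q → MvPowerSeries (Fin n) k) :
    F.tangent a (x + y) = F.tangent a x + F.tangent a y := by
  funext j
  ext d
  have hfin : (Function.support fun ν =>
      MvPolynomial.eval (cf a) (MvPolynomial.pderiv ν (F (j, d)))).Finite := by
    refine (F (j, d)).vars.finite_toSet.subset fun ν hν => ?_
    by_contra hν'
    simp [MvPolynomial.pderiv_eq_zero_of_notMem_vars hν'] at hν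
  have hx := hfin.subset (Function.support_mul_subset_left _ fun ν => cf x ν)
  have hy := hfin.subset (Function.support_mul_subset_left _ fun ν => cf y ν)
  simp only [Pi.add_apply, map_add, coeff_tangent, ← finsum_add_distrib hx hy, ← mul_add]
  rfl

lemma eval_eq_tangent_add_scission (F : TexData k n q p) (σ : TexData k n p q)
    (hscis : ∀ z, F.tangent 0 (σ.eval (F.tangent 0 z)) = F.tangent 0 z)
    {a : Fin q → MvPowerSeries (Fin n) k}
    (hquasi : ∃ z, F.tangent 0 z = F.eval a - F.tangent 0 a) :
    F.eval a = F.tangent 0 (a + σ.eval (F.eval a - F.tangent 0 a)) := by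
  obtain ⟨z, hz⟩ := hquasi
  rw [tangent_add_right, ← hz, hscis, hz, add_sub_cancel]

end TexData

theorem quasi_submersion_linearization_general
    {k : Type} [Field k] {n m p : ℕ} (l : ℕ)
    (U : Set (Fin m → MvPowerSeries (Fin n) k)) (hU : U = nbhd k n m l)
    (F : TexData k n m p) (hf0 : F.eval 0 = 0)
    (hquasi : ∀ a ∈ U, ∃ z, F.tangent 0 z = F.eval a - F.tangent 0 a)
    (σd : TexData k n p m) (hσ_lin : IsLinearMap k σd.eval)
    (hscis : ∀ z, F.tangent 0 (σd.eval (F.tangent 0 z)) = F.tangent 0 z)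
    (hcontr : ∀ a ∈ U, ∀ b ∈ U, a ≠ b →
      ordV (a - b) < ordV (σd.eval (F.eval a - F.tangent 0 a) -
        σd.eval (F.eval b - F.tangent 0 b))) :
    Set.BijOn (fun a => a + σd.eval (F.eval a - F.tangent 0 a)) U U ∧
    (∀ a ∈ U, F.eval a = F.tangent 0 (a + σd.eval (F.eval a - F.tangent 0 a))) ∧
    F.eval '' U = (fun z => F.tangent 0 z) '' U := by
  subst hU
  have h0 : σd.eval (F.eval 0 - F.tangent 0 0) = 0 := by
    rw [hf0, F.tangent_zero_right, sub_zero, hσ_lin.map_zero]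
  have hbij := Cords.ContractiveOn.bijOn_add_self hcontr h0
  have hfac : ∀ a ∈ nbhd k n m l,
      F.eval a = F.tangent 0 (a + σd.eval (F.eval a - F.tangent 0 a)) := fun a ha =>
    F.eval_eq_tangent_add_scission σd hscis (hquasi a ha)
  refine ⟨hbij, hfac, ?_⟩
  rw [Set.image_congr hfac, ← Set.image_image (F.tangent 0), hbij.image_eq]

/-- **Linearization of quasi-submersions.**
Let `f = ℓ + h` be a textile map on `U = m^l·C^m` with `f(0) = 0` and `ℓ = T_0 f`. Assume
`f` is a quasi-submersion (`im h ⊆ im ℓ`) and that `ℓ` admits a scission `σ` with `σ∘h`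
contractive on `U`. Then `u = id + σ∘h` is a bijection of `U` onto itself and `f = ℓ∘u` on
`U`; in particular `f(U) = ℓ(U)`. -/
theorem quasi_submersion_linearization
    {k : Type} [Field k] [CharZero k] {n m p : ℕ} (l : ℕ)
    (U : Set (Fin m → MvPowerSeries (Fin n) k)) (hU : U = nbhd k n m l)
    (F : TexData k n m p) (hf0 : F.eval 0 = 0)
    (hquasi : ∀ a ∈ U, ∃ z, F.tangent 0 z = F.eval a - F.tangent 0 a)
    (σd : TexData k n p m) (hσ_lin : IsLinearMap k σd.eval)
    (hscis : ∀ z, F.tangent 0 (σd.eval (F.tangent 0 z)) = F.tangent 0 z)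
    (hcontr : ∀ a ∈ U, ∀ b ∈ U, a ≠ b →
      ordV (a - b) < ordV (σd.eval (F.eval a - F.tangent 0 a) -
        σd.eval (F.eval b - F.tangent 0 b))) :
    Set.BijOn (fun a => a + σd.eval (F.eval a - F.tangent 0 a)) U U ∧
    (∀ a ∈ U, F.eval a = F.tangent 0 (a + σd.eval (F.eval a - F.tangent 0 a))) ∧
    F.eval '' U = (fun z => F.tangent 0 z) '' U :=
  quasi_submersion_linearization_general l U hU F hf0 hquasi σd hσ_lin hscis hcontr
end
end

section
/- Pointwise constant rank criterion: Let f : U ⊆ C^m → C^p be a tactile map on an m-adic neighbourhood U of 0, induced by substitution into a power series vector, so that each tangent map T_a f is k[[x]]-linear. If in(im(T_a f)) = in(im(T_0 f)) for all a ∈ U, then f has pointwise constant rank at 0 with respect to Δ(T_0 f): for every a ∈ U one has the direct sum decomposition C^p = im(T_a f) ⊕ Δ(T_0 f), where Δ(T_0 f) = {b ∈ C^p : supp(b) ∩ supp(in(im(T_0 f))) = ∅}. -/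
/- Pointwise constant rank criterion for tactile maps. -/

noncomputable section

open MvPowerSeries

variable {k : Type} [Field k]

/-- Substitution of power series `g s` (of positive order) for the variables of `F`. -/
def substPS {σ τ : Type} (F : MvPowerSeries σ k) (g : σ → MvPowerSeries τ k) :
    MvPowerSeries τ k :=
  (fun β => ∑ᶠ d : σ →₀ ℕ,
    MvPowerSeries.coeff d F *
      MvPowerSeries.coeff β (d.prod fun s e => (g s) ^ e) : (τ →₀ ℕ) → k)

/-- The formal partial derivative of a multivariate power series. -/
def pderivPS {σ : Type} [DecidableEq σ] (s : σ) (F : MvPowerSeries σ k) :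
    MvPowerSeries σ k :=
  (fun d => ((d s : ℕ) + 1 : k) *
    MvPowerSeries.coeff (d + Finsupp.single s 1) F : (σ →₀ ℕ) → k)

/-- Lexicographic comparison of multi-exponents. -/
def lexLt {n : ℕ} (α β : Fin n →₀ ℕ) : Prop :=
  ∃ i, α i < β i ∧ ∀ j, j < i → α j = β j

/-- The module order on the indices `(α, j)` of monomial vectors. -/
def modLt {n p : ℕ} (w : Fin n → ℝ) (x y : (Fin n →₀ ℕ) × Fin p) : Prop :=
  Lval w x.1 < Lval w y.1 ∨
    (Lval w x.1 = Lval w y.1 ∧ (lexLt x.1 y.1 ∨ (x.1 = y.1 ∧ x.2 < y.2)))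

/-- Support of a vector of power series. -/
def suppV {n p : ℕ} (a : Fin p → MvPowerSeries (Fin n) k) : Set ((Fin n →₀ ℕ) × Fin p) :=
  {ι | MvPowerSeries.coeff ι.1 (a ι.2) ≠ 0}

/-- `ι` is the initial index of `a`. -/
def IsInitial {n p : ℕ} (w : Fin n → ℝ) (a : Fin p → MvPowerSeries (Fin n) k)
    (ι : (Fin n →₀ ℕ) × Fin p) : Prop :=
  ι ∈ suppV a ∧ ∀ κ ∈ suppV a, κ ≠ ι → modLt w ι κ

/-- The monomial vector `x^{(α,j)}`. -/
def monVec {n p : ℕ} (ι : (Fin n →₀ ℕ) × Fin p) : Fin p → MvPowerSeries (Fin n) k :=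
  fun j => if j = ι.2 then MvPowerSeries.monomial ι.1 1 else 0

/-- The initial module of a submodule `M ⊆ k[[x]]^p`. -/
def initialModule {n p : ℕ} (w : Fin n → ℝ)
    (M : Submodule (MvPowerSeries (Fin n) k) (Fin p → MvPowerSeries (Fin n) k)) :
    Submodule (MvPowerSeries (Fin n) k) (Fin p → MvPowerSeries (Fin n) k) :=
  Submodule.span _ {v | ∃ a ∈ M, ∃ ι, IsInitial w a ι ∧ v = monVec ι}

/-- The support of a monomial submodule. -/
def suppSet {n p : ℕ}
    (N : Submodule (MvPowerSeries (Fin n) k) (Fin p → MvPowerSeries (Fin n) k)) :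
    Set ((Fin n →₀ ℕ) × Fin p) :=
  {ι | monVec ι ∈ N}

/-- The family of partial derivative vectors `∂_{y_i} g(x, a)` of the tactile map induced by
`g ∈ k[[x,y]]^p`.  The tangent map of the tactile map at `a` is `v ↦ Σ_i v_i • (tacD g a i)`,
which is `k[[x]]`-linear. -/
def tacD {n m p : ℕ} (g : Fin p → MvPowerSeries (Fin n ⊕ Fin m) k)
    (a : Fin m → MvPowerSeries (Fin n) k) (i : Fin m) : Fin p → MvPowerSeries (Fin n) k :=
  fun j => substPS (pderivPS (Sum.inr i) (g j)) (Sum.elim (fun s => MvPowerSeries.X s) a)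


/-
The criterion reduces to Grauert–Hironaka division: for every submodule `M ⊆ k[[x]]^p`, every `b`
splits uniquely as `b = x + r` with `x ∈ M` and `supp r` disjoint from `supp in(M)`. As this
condition on `r` only involves `in(M)`, the hypothesis `in(im T_a f) = in(im T_0 f)` yields
`C^p = im(T_a f) ⊕ Δ(T_0 f)`.

Uniqueness holds because a nonzero element of `M` has its initial index in `supp in(M)`. For
existence, Dickson's lemma gives finitely many `u_s ∈ M` whose initial monomials generate `in(M)`.
The multiples `U_ι = x^{ι - s} u_s`, one for each `ι ∈ supp in(M)`, form a unitriangular system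
for the monomial order, solvable coefficient by coefficient because, the weights being positive,
every index has only finitely many predecessors. The solution `Σ c_ι U_ι` converges
coefficientwise and regroups as `Σ_s q_s u_s ∈ M`.
-/

theorem exists_add_sum_mul_eq_of_wellFounded {I R : Type*} [Ring R] {r : I → I → Prop}
    (hr : WellFounded r) (F : I → Finset I) (hF : ∀ i, ∀ j ∈ F i, r j i)
    (a : I → I → R) (y : I → R) :
    ∃ c : I → R, ∀ i, c i + ∑ j ∈ F i, a i j * c j = y i := by
  classical
  refine ⟨hr.fix fun i c => y i - ∑ j ∈ F i, a i j * if h : r j i then c j h else 0,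
    fun i => ?_⟩
  rw [hr.fix_eq, sub_add_eq_add_sub, sub_eq_iff_eq_add, add_right_inj]
  exact Finset.sum_congr rfl fun j hj => by rw [dif_pos (hF i j hj)]

theorem exists_finite_subset_le_cover {α : Type*} [PartialOrder α] [WellQuasiOrderedLE α]
    (s : Set α) : ∃ t ⊆ s, t.Finite ∧ ∀ a ∈ s, ∃ b ∈ t, b ≤ a := by
  refine ⟨{b | Minimal (· ∈ s) b}, fun _ hb => hb.prop,
    (setOfPred_minimal_antichain _).finite_of_partiallyWellOrderedOn
      (Set.isPWO_of_wellQuasiOrderedLE _), fun a ha => ?_⟩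
  obtain ⟨b, hba, hb⟩ := (Set.isPWO_of_wellQuasiOrderedLE s).exists_le_minimal ha
  exact ⟨b, hb, hba⟩

theorem exists_finset_subset_le_cover_fiberwise {α β : Type*} [PartialOrder α]
    [WellQuasiOrderedLE α] [Finite β] (S : Set (α × β)) :
    ∃ B : Finset (α × β), ↑B ⊆ S ∧ ∀ ι ∈ S, ∃ κ ∈ B, κ.2 = ι.2 ∧ κ.1 ≤ ι.1 := by
  choose t hts ht hcover using fun j : β => exists_finite_subset_le_cover {a | (a, j) ∈ S}
  have hfin : (⋃ j, (·, j) '' t j).Finite := Set.finite_iUnion fun j => (ht j).image _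
  refine ⟨hfin.toFinset, fun ι hι => ?_, fun ι hι => ?_⟩
  · obtain ⟨j, a, ha, rfl⟩ := Set.mem_iUnion.mp (hfin.mem_toFinset.mp hι)
    exact hts j ha
  · obtain ⟨a, ha, hle⟩ := hcover ι.2 ι.1 hι
    exact ⟨(a, ι.2), hfin.mem_toFinset.mpr (Set.mem_iUnion.mpr ⟨ι.2, a, ha, rfl⟩), rfl, hle⟩

section Summation

open MvPowerSeries.WithPiTopology

variable {ι σ R : Type*} [Semiring R] [TopologicalSpace R]

theorem summable_monomial_of_finite {c : ι → R} {e : ι → σ →₀ ℕ}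
    (h : ∀ d, {i | c i ≠ 0 ∧ e i = d}.Finite) :
    Summable fun i => monomial (e i) (c i) := by
  classical
  refine summable_iff_summable_coeff.mpr fun d => summable_of_hasFiniteSupport ?_
  refine (h d).subset fun i hi => ?_
  simp only [Function.mem_support, coeff_monomial, ne_eq, ite_eq_right_iff, not_forall] at hi
  obtain ⟨rfl, hi⟩ := hi
  exact ⟨hi, rfl⟩

theorem coeff_eq_sum_of_hasSum [T2Space R] {p : ℕ} {f : ι → Fin p → MvPowerSeries σ R}
    {x : Fin p → MvPowerSeries σ R} (hf : HasSum f x) (d : σ →₀ ℕ) (j : Fin p) (s : Finset ι)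
    (hs : ∀ i ∉ s, coeff d (f i j) = 0) :
    coeff d (x j) = ∑ i ∈ s, coeff d (f i j) :=
  (hasSum_iff_hasSum_coeff.mp (Pi.hasSum.mp hf j) d).unique (hasSum_sum_of_ne_finset_zero hs)

end Summation

/-- The submodule need not be closed: only finitely many of its elements are summed over. -/
theorem Submodule.exists_mem_hasSum_smul {ι β R V : Type*} [DecidableEq β] [Semiring R]
    [TopologicalSpace R]
    [AddCommMonoid V] [Module R V] [TopologicalSpace V] [ContinuousAdd V] [ContinuousSMul R V]
    (M : Submodule R V) (B : Finset β) {u : β → V} (hu : ∀ s ∈ B, u s ∈ M)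
    {base : ι → β} {g : ι → R} (hbase : ∀ i, g i ≠ 0 → base i ∈ B)
    (hg : ∀ s ∈ B, Summable fun i => if base i = s then g i else 0) :
    ∃ x ∈ M, HasSum (fun i => g i • u (base i)) x := by
  refine ⟨∑ s ∈ B, (∑' i, if base i = s then g i else 0) • u s,
    M.sum_mem fun s hs => M.smul_mem _ (hu s hs), ?_⟩
  convert hasSum_sum fun s hs => (hg s hs).hasSum.smul_const (u s) using 2 with i
  by_cases hi : g i = 0
  · simp [hi]
  · simp [ite_smul, Finset.sum_ite_eq, hbase i hi]

namespace PowerSeriesDivision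

variable {n p : ℕ} {w : Fin n → ℝ}

local notation "Idx" => (Fin n →₀ ℕ) × Fin p
local notation "Vec" => Fin p → MvPowerSeries (Fin n) k

def orderKey (w : Fin n → ℝ) (ι : Idx) : ℝ ×ₗ (Lex (Fin n → ℕ) ×ₗ Fin p) :=
  toLex (Lval w ι.1, toLex (toLex ⇑ι.1, ι.2))

theorem orderKey_injective (w : Fin n → ℝ) : Function.Injective (orderKey (p := p) w) := by
  intro ι κ h
  simp only [orderKey, toLex_inj, Prod.mk.injEq] at h
  exact Prod.ext (DFunLike.coe_injective h.2.1) h.2.2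

theorem modLt_iff_orderKey_lt (ι κ : Idx) : modLt w ι κ ↔ orderKey w ι < orderKey w κ := by
  have hlex : lexLt ι.1 κ.1 ↔ toLex ⇑ι.1 < toLex ⇑κ.1 :=
    ⟨fun ⟨i, h1, h2⟩ => ⟨i, h2, h1⟩, fun ⟨i, h2, h1⟩ => ⟨i, h1, h2⟩⟩
  simp only [modLt, orderKey, Prod.Lex.toLex_lt_toLex, hlex, toLex_inj, DFunLike.coe_fn_eq]

theorem Lval_eq_sum (w : Fin n → ℝ) (d : Fin n →₀ ℕ) : Lval w d = ∑ i, w i * d i := by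
  rw [Lval, Finsupp.sum_fintype]
  simp

theorem Lval_add (w : Fin n → ℝ) (d e : Fin n →₀ ℕ) : Lval w (d + e) = Lval w d + Lval w e := by
  simp only [Lval_eq_sum, Finsupp.add_apply, Nat.cast_add, mul_add, Finset.sum_add_distrib]

theorem mul_le_Lval (hw : ∀ i, 0 ≤ w i) (d : Fin n →₀ ℕ) (i : Fin n) :
    w i * d i ≤ Lval w d := by
  rw [Lval_eq_sum]
  exact Finset.single_le_sum (f := fun j => w j * d j)
    (fun j _ => mul_nonneg (hw j) (Nat.cast_nonneg _)) (Finset.mem_univ i)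

theorem finite_setOf_Lval_le (hw : ∀ i, 0 < w i) (C : ℝ) :
    {ι : Idx | Lval w ι.1 ≤ C}.Finite := by
  let D : Fin n →₀ ℕ := Finsupp.equivFunOnFinite.symm fun i => ⌊C / w i⌋₊
  refine ((Set.finite_Iic D).prod Set.finite_univ).subset fun ι hι => ⟨fun i => ?_, trivial⟩
  have h : w i * ι.1 i ≤ C := (mul_le_Lval (fun i => (hw i).le) ι.1 i).trans hι
  exact Nat.le_floor ((le_div_iff₀' (hw i)).mpr h)

theorem Lval_le_of_orderKey_le {ι κ : Idx} (h : orderKey w ι ≤ orderKey w κ) :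
    Lval w ι.1 ≤ Lval w κ.1 := by
  rcases Prod.Lex.le_iff.mp h with h | ⟨h, -⟩
  exacts [h.le, h.le]

theorem finite_setOf_orderKey_le (hw : ∀ i, 0 < w i) (ι : Idx) :
    {κ : Idx | orderKey w κ ≤ orderKey w ι}.Finite :=
  (finite_setOf_Lval_le hw (Lval w ι.1)).subset fun _ => Lval_le_of_orderKey_le

theorem finite_setOf_orderKey_lt (hw : ∀ i, 0 < w i) (ι : Idx) :
    {κ : Idx | orderKey w κ < orderKey w ι}.Finite :=
  (finite_setOf_orderKey_le hw ι).subset fun κ (h : orderKey w κ < orderKey w ι) => h.le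

/-- Finitely many predecessors: the number of them strictly decreases along the order. -/
theorem wellFounded_orderKey_lt (hw : ∀ i, 0 < w i) :
    WellFounded fun κ ι : Idx => orderKey w κ < orderKey w ι := by
  refine Subrelation.wf (fun {κ ι} h => ?_)
    (measure fun ι : Idx => {κ : Idx | orderKey w κ < orderKey w ι}.ncard).wf
  refine Set.ncard_lt_ncard ?_ (finite_setOf_orderKey_lt hw ι)
  exact (Set.ssubset_iff_of_subset fun _ h' => lt_trans h' h).mpr
    ⟨κ, h, (lt_irrefl (orderKey w κ) ·)⟩

theorem orderKey_add_le (γ : Fin n →₀ ℕ) {ι κ : Idx} (h : orderKey w ι ≤ orderKey w κ) :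
    orderKey w (γ + ι.1, ι.2) ≤ orderKey w (γ + κ.1, κ.2) := by
  rcases h.lt_or_eq with h | h
  · refine le_of_lt ((modLt_iff_orderKey_lt _ _).mp ?_)
    rcases (modLt_iff_orderKey_lt ι κ).mpr h with h | ⟨h1, ⟨i, hi1, hi2⟩ | ⟨h2, h3⟩⟩
    · exact Or.inl (by simp only [Lval_add]; linarith)
    · exact Or.inr ⟨by simp only [Lval_add, h1],
        Or.inl ⟨i, by simpa using hi1, fun j hj => by simpa using hi2 j hj⟩⟩
    · exact Or.inr ⟨by simp only [Lval_add, h2], Or.inr ⟨by rw [h2], h3⟩⟩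
  · rw [orderKey_injective w h]

theorem mem_suppV_sub {a b : Vec} {κ : Idx} (h : κ ∈ suppV (a - b)) : κ ∈ suppV a ∪ suppV b := by
  by_contra hab
  simp only [Set.mem_union, suppV, Set.mem_ofPred_eq, not_or, not_not] at hab
  simp [suppV, hab] at h

theorem mem_suppV_monVec {ι κ : Idx} : κ ∈ suppV (monVec ι : Vec) ↔ κ = ι := by
  rcases κ with ⟨β, j⟩
  by_cases hj : j = ι.2 <;> by_cases hβ : β = ι.1 <;>
    simp [suppV, monVec, coeff_monomial, hj, hβ, Prod.ext_iff]

theorem isInitial_iff {a : Vec} {ι : Idx} :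
    IsInitial w a ι ↔ ι ∈ suppV a ∧ ∀ κ ∈ suppV a, orderKey w ι ≤ orderKey w κ := by
  refine and_congr_right fun _ => forall₂_congr fun κ _ => ?_
  rw [modLt_iff_orderKey_lt, le_iff_lt_or_eq, (orderKey_injective w).eq_iff,
    or_iff_not_imp_right, ne_comm]

theorem exists_isInitial (hw : ∀ i, 0 < w i) {a : Vec} (ha : a ≠ 0) : ∃ ι, IsInitial w a ι := by
  have hne : (suppV a).Nonempty := by
    contrapose! ha
    ext j d
    simpa [suppV] using Set.eq_empty_iff_forall_notMem.mp ha (d, j)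
  obtain ⟨ι, hι, hmin⟩ := (wellFounded_orderKey_lt hw).has_min _ hne
  exact ⟨ι, isInitial_iff.mpr ⟨hι, fun κ hκ => not_lt.mp (hmin κ hκ)⟩⟩

theorem isInitial_monomial_sub_smul {a : Vec} {ι κ : Idx} {c : k} (hc : c ≠ 0)
    (h : IsInitial w a κ) (hj : κ.2 = ι.2) (hle : κ.1 ≤ ι.1) :
    IsInitial w (monomial (ι.1 - κ.1) c • a) ι := by
  rw [isInitial_iff] at h ⊢
  refine ⟨?_, fun θ hθ => ?_⟩
  · simpa [suppV, coeff_monomial_mul, tsub_tsub_cancel_of_le hle, hc, ← hj] using h.1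
  · simp only [suppV, Set.mem_ofPred_eq, Pi.smul_apply, smul_eq_mul, coeff_monomial_mul, ne_eq,
      ite_eq_right_iff, not_forall, mul_eq_zero, not_or] at hθ
    obtain ⟨hθle, -, hθ⟩ := hθ
    have := orderKey_add_le (ι.1 - κ.1) (h.2 (θ.1 - (ι.1 - κ.1), θ.2) hθ)
    rwa [tsub_add_cancel_of_le hle, hj, add_tsub_cancel_of_le hθle] at this

open MvPowerSeries.WithPiTopology in
theorem summable_ite_monomial_sub [TopologicalSpace k] {c : Idx → k} {base : Idx → Idx}
    (hbase : ∀ ι, c ι ≠ 0 → (base ι).1 ≤ ι.1) (s : Idx) :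
    Summable fun ι => if base ι = s then monomial (ι.1 - (base ι).1) (c ι) else 0 := by
  have hfiber : (fun ι : Idx => if base ι = s then monomial (ι.1 - (base ι).1) (c ι) else 0) =
      fun ι => monomial (ι.1 - s.1) (if base ι = s then c ι else 0) := by
    funext ι
    split_ifs with h <;> simp [h]
  rw [hfiber]
  refine summable_monomial_of_finite fun d =>
    ((Set.finite_singleton (d + s.1)).prod Set.finite_univ).subset ?_
  rintro ι ⟨hne, rfl⟩
  obtain ⟨rfl, hc⟩ : base ι = s ∧ c ι ≠ 0 := by simpa using hne
  exact ⟨(tsub_add_cancel_of_le (hbase ι hc)).symm, trivial⟩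

def standardMultiple (u : Idx → Vec) (base : Idx → Idx) (ι : Idx) : Vec :=
  monomial (ι.1 - (base ι).1) (1 : k) • u (base ι)

variable {M : Submodule (MvPowerSeries (Fin n) k) (Fin p → MvPowerSeries (Fin n) k)}

theorem mem_suppSet_initialModule {a : Vec} {ι : Idx} (ha : a ∈ M) (hι : IsInitial w a ι) :
    ι ∈ suppSet (initialModule w M) :=
  Submodule.subset_span ⟨a, ha, ι, hι, rfl⟩

theorem exists_isInitial_le_of_mem_initialModule {v : Vec} (hv : v ∈ initialModule w M)
    {ι : Idx} (hι : ι ∈ suppV v) : ∃ a ∈ M, ∃ κ, IsInitial w a κ ∧ κ.2 = ι.2 ∧ κ.1 ≤ ι.1 := by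
  induction hv using Submodule.span_induction generalizing ι with
  | mem v hv =>
    obtain ⟨a, ha, κ, hκ, rfl⟩ := hv
    obtain rfl := mem_suppV_monVec.mp hι
    exact ⟨a, ha, ι, hκ, rfl, le_rfl⟩
  | zero => simp [suppV] at hι
  | add v v' _ _ ih ih' =>
    rcases mem_suppV_sub (b := -v') (by simpa using hι) with h | h
    · exact ih h
    · exact ih' (by simpa [suppV] using h)
  | smul r v _ ih =>
    simp only [suppV, Set.mem_ofPred_eq, Pi.smul_apply, smul_eq_mul, coeff_mul] at hι
    obtain ⟨β, hβ, hne⟩ := Finset.exists_ne_zero_of_sum_ne_zero hι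
    obtain ⟨a, ha, κ, hκ, hj, hle⟩ := ih (ι := (β.2, ι.2)) (right_ne_zero_of_mul hne)
    exact ⟨a, ha, κ, hκ, hj,
      hle.trans (Finset.HasAntidiagonal.mem_antidiagonal.mp hβ ▸ le_add_self)⟩

theorem exists_mem_isInitial_coeff_eq_one {ι : Idx} (h : ι ∈ suppSet (initialModule w M)) :
    ∃ u ∈ M, IsInitial w u ι ∧ coeff ι.1 (u ι.2) = 1 := by
  obtain ⟨a, ha, κ, hκ, hj, hle⟩ :=
    exists_isInitial_le_of_mem_initialModule h (mem_suppV_monVec.mpr rfl)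
  have hc : coeff κ.1 (a κ.2) ≠ 0 := hκ.1
  refine ⟨monomial (R := k) (ι.1 - κ.1) (coeff κ.1 (a κ.2))⁻¹ • a, M.smul_mem _ ha,
    isInitial_monomial_sub_smul (inv_ne_zero hc) hκ hj hle, ?_⟩
  simp [coeff_monomial_mul, tsub_tsub_cancel_of_le hle, ← hj, hc]

open MvPowerSeries.WithPiTopology in
theorem exists_mem_forall_coeff_sub_eq_zero (hw : ∀ i, 0 < w i) {S : Set Idx} {B : Finset Idx}
    {u : Idx → Vec} (hu : ∀ s ∈ B, u s ∈ M) {base : Idx → Idx}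
    (hbase : ∀ ι ∈ S, base ι ∈ B ∧ (base ι).1 ≤ ι.1)
    (hU : ∀ ι ∈ S, IsInitial w (standardMultiple u base ι) ι ∧
      coeff ι.1 (standardMultiple u base ι ι.2) = 1) (b : Vec) :
    ∃ x ∈ M, ∀ κ ∈ S, coeff κ.1 ((b - x) κ.2) = 0 := by
  classical
  let _ : TopologicalSpace k := ⊥
  have : DiscreteTopology k := ⟨rfl⟩
  let P : Idx → Finset Idx := fun ι => (finite_setOf_orderKey_lt hw ι).toFinset
  -- the rows of the system outside `S` read `c κ = 0`
  obtain ⟨c, hc⟩ := exists_add_sum_mul_eq_of_wellFounded (wellFounded_orderKey_lt hw) P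
    (fun ι κ hκ => (finite_setOf_orderKey_lt hw ι).mem_toFinset.mp hκ)
    (fun κ ι => if κ ∈ S then coeff κ.1 (standardMultiple u base ι κ.2) else 0)
    (fun κ : Idx => if κ ∈ S then coeff κ.1 (b κ.2) else 0)
  have hcS : ∀ ι, c ι ≠ 0 → ι ∈ S := fun ι hι =>
    by_contra fun hS => hι (by simpa [hS] using hc ι)
  have hterm : ∀ ι κ : Idx, coeff κ.1 ((monomial (ι.1 - (base ι).1) (c ι) • u (base ι)) κ.2) =
      coeff κ.1 (standardMultiple u base ι κ.2) * c ι := by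
    intro ι κ
    simp only [standardMultiple, Pi.smul_apply, smul_eq_mul, coeff_monomial_mul]
    split_ifs <;> ring
  obtain ⟨x, hxM, hx⟩ := M.exists_mem_hasSum_smul B hu
    (fun ι hι => (hbase ι (hcS ι (by contrapose! hι; simp [hι]))).1)
    (fun s _ => summable_ite_monomial_sub (fun ι hι => (hbase ι (hcS ι hι)).2) s)
  refine ⟨x, hxM, fun κ hκ => ?_⟩
  have hsupp : ∀ ι ∉ insert κ (P κ),
      coeff κ.1 (standardMultiple u base ι κ.2) * c ι = 0 := by
    intro ι hι
    by_contra hne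
    have hle := (isInitial_iff.mp (hU ι (hcS ι (right_ne_zero_of_mul hne))).1).2 κ
      (left_ne_zero_of_mul hne)
    rcases hle.eq_or_lt with h | h
    · exact hι (orderKey_injective w h ▸ Finset.mem_insert_self κ (P κ))
    · exact hι (Finset.mem_insert_of_mem ((finite_setOf_orderKey_lt hw κ).mem_toFinset.mpr h))
  have hκP : κ ∉ P κ := by simp [P]
  have hcκ := hc κ
  simp only [hκ, if_true] at hcκ
  rw [Pi.sub_apply, map_sub,
    coeff_eq_sum_of_hasSum hx κ.1 κ.2 _ fun ι hι => (hterm ι κ).trans (hsupp ι hι),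
    Finset.sum_congr rfl fun ι _ => hterm ι κ, Finset.sum_insert hκP, (hU κ hκ).2, one_mul, hcκ,
    sub_self]

theorem exists_mem_forall_suppV_sub_notMem (hw : ∀ i, 0 < w i) (b : Vec) :
    ∃ x ∈ M, ∀ κ ∈ suppV (b - x), κ ∉ suppSet (initialModule w M) := by
  obtain ⟨B, hBS, hB⟩ := exists_finset_subset_le_cover_fiberwise (suppSet (initialModule w M))
  choose! u hu using fun s (hs : s ∈ suppSet (initialModule w M)) =>
    exists_mem_isInitial_coeff_eq_one hs
  choose! base hbase using hB
  have hstd : ∀ ι ∈ suppSet (initialModule w M),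
      IsInitial w (standardMultiple u base ι) ι ∧
        coeff ι.1 (standardMultiple u base ι ι.2) = 1 := by
    intro ι hι
    obtain ⟨hB, hj, hle⟩ := hbase ι hι
    obtain ⟨-, hini, hone⟩ := hu (base ι) (hBS hB)
    refine ⟨isInitial_monomial_sub_smul one_ne_zero hini hj hle, ?_⟩
    simp [standardMultiple, coeff_monomial_mul, tsub_tsub_cancel_of_le hle, ← hj, hone]
  obtain ⟨x, hxM, hx⟩ := exists_mem_forall_coeff_sub_eq_zero hw (fun s hs => (hu s (hBS hs)).1)
    (fun ι hι => ⟨(hbase ι hι).1, (hbase ι hι).2.2⟩) hstd b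
  exact ⟨x, hxM, fun κ hκ hκS => hκ (hx κ hκS)⟩

theorem eq_zero_of_mem_of_forall_suppV_notMem (hw : ∀ i, 0 < w i) {a : Vec} (ha : a ∈ M)
    (h : ∀ κ ∈ suppV a, κ ∉ suppSet (initialModule w M)) : a = 0 := by
  by_contra ha0
  obtain ⟨ι, hι⟩ := exists_isInitial hw ha0
  exact h ι hι.1 (mem_suppSet_initialModule ha hι)

theorem existsUnique_add_of_initialModule (hw : ∀ i, 0 < w i) (b : Vec) :
    ∃! q : Vec × Vec, q.1 ∈ M ∧ (∀ κ ∈ suppV q.2, κ ∉ suppSet (initialModule w M)) ∧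
      b = q.1 + q.2 := by
  obtain ⟨x, hxM, hx⟩ := exists_mem_forall_suppV_sub_notMem hw b
  refine ⟨(x, b - x), ⟨hxM, hx, (add_sub_cancel x b).symm⟩, ?_⟩
  rintro ⟨x', y'⟩ ⟨hx'M, hy', rfl⟩
  have hdiff : x' - x = 0 := by
    refine eq_zero_of_mem_of_forall_suppV_notMem hw (M.sub_mem hx'M hxM) fun κ hκ => ?_
    rw [show x' - x = x' + y' - x - y' by abel] at hκ
    exact (mem_suppV_sub hκ).elim (hx κ) (hy' κ)
  obtain rfl := sub_eq_zero.mp hdiff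
  simp

end PowerSeriesDivision

theorem pointwise_constant_rank_general
    {n m p : ℕ}
    (w : Fin n → ℝ) (hw : ∀ i, 0 < w i)
    (U : Set (Fin m → MvPowerSeries (Fin n) k))
    (g : Fin p → MvPowerSeries (Fin n ⊕ Fin m) k)
    (hinit : ∀ a ∈ U,
      initialModule w (Submodule.span _ (Set.range (tacD g a))) =
      initialModule w (Submodule.span _ (Set.range (tacD g 0)))) :
    ∀ a ∈ U, ∀ b : Fin p → MvPowerSeries (Fin n) k,
      ∃! q : (Fin p → MvPowerSeries (Fin n) k) × (Fin p → MvPowerSeries (Fin n) k),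
        q.1 ∈ Submodule.span (MvPowerSeries (Fin n) k) (Set.range (tacD g a)) ∧
        (∀ κ ∈ suppV q.2,
          κ ∉ suppSet (initialModule w
            (Submodule.span _ (Set.range (tacD g 0))))) ∧
        b = q.1 + q.2 := by
  intro a ha b
  rw [← hinit a ha]
  exact PowerSeriesDivision.existsUnique_add_of_initialModule hw b

/-- **Pointwise constant rank criterion.**
Let `f` be the tactile map induced by `g ∈ k[[x,y]]^p`, with `k[[x]]`-linear tangent maps
`T_a f`.  If `in(im(T_a f)) = in(im(T_0 f))` for all `a ∈ U`, then for every `a ∈ U`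
one has the direct sum decomposition `C^p = im(T_a f) ⊕ Δ(T_0 f)`, where
`Δ(T_0 f) = {b : supp(b) ∩ supp(in(im(T_0 f))) = ∅}`. -/
theorem pointwise_constant_rank
    [CharZero k] {n m p : ℕ} (l : ℕ) (hl : 1 ≤ l)
    (w : Fin n → ℝ) (hw : ∀ i, 0 < w i)
    (U : Set (Fin m → MvPowerSeries (Fin n) k)) (hU : U = nbhd k n m l)
    (g : Fin p → MvPowerSeries (Fin n ⊕ Fin m) k)
    (hinit : ∀ a ∈ U,
      initialModule w (Submodule.span _ (Set.range (tacD g a))) =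
      initialModule w (Submodule.span _ (Set.range (tacD g 0)))) :
    ∀ a ∈ U, ∀ b : Fin p → MvPowerSeries (Fin n) k,
      ∃! q : (Fin p → MvPowerSeries (Fin n) k) × (Fin p → MvPowerSeries (Fin n) k),
        q.1 ∈ Submodule.span (MvPowerSeries (Fin n) k) (Set.range (tacD g a)) ∧
        (∀ κ ∈ suppV q.2,
          κ ∉ suppSet (initialModule w
            (Submodule.span _ (Set.range (tacD g 0))))) ∧
        b = q.1 + q.2 :=
  pointwise_constant_rank_general w hw U g hinit
end
end

section
/- Fibre triviality for arcs on a hypersurface (Denef–Loeser type): Let k be a field of characteristic 0, f ∈ k[x_1,…,x_n], and a ∈ k[[t]]^n an arc with f(a) = 0 such that e' := min_{1≤i≤n} ord_t(∂_i f(a)) is finite and e' ≤ e for a given integer e ≥ 0. Then the fibre of the truncation map over a, namely the set {b ∈ k[[t]]^n : f(b) = 0 and b ≡ a mod (t)^{e+1}}, is in bijection with ((t)^{e+1}·k[[t]])^{n−1}. -/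
/-!
Choose `i` with `ord ∂ᵢf(a) = m` minimal among the partial derivatives, so `m ≤ e < E := e + 1`;
the bijection is `b ↦ (bⱼ - aⱼ)_{j ≠ i}`. Freezing the coordinates `bⱼ`, `j ≠ i`, turns `f` into
a polynomial `P` in `xᵢ` over `k⟦t⟧`. As every `∂ⱼf(a)` is divisible by `t ^ m`, first-order
Taylor expansion gives `t ^ (m + E) ∣ P(aᵢ)`, while `P'(aᵢ) ≡ ∂ᵢf(a) mod t ^ E` has order exactly
`m`. Hensel's lemma in Tougeron's form then yields a root of `P` congruent to `aᵢ` mod `t ^ E`,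
and it is unique: two such roots differing by `z ≠ 0` would force `t ^ E ∣ P'(bᵢ)`, which has
order `m < E`.
-/

theorem IsAdicComplete.exists_isFixedPt {R M : Type*} [CommRing R] [AddCommGroup M] [Module R M]
    {I : Ideal R} [IsAdicComplete I M] {G : M → M}
    (hG : ∀ (N : ℕ) (x y : M), x ≡ y [SMOD (I ^ N • ⊤ : Submodule R M)] →
      G x ≡ G y [SMOD (I ^ (N + 1) • ⊤ : Submodule R M)]) :
    ∃ x, Function.IsFixedPt G x := by
  have hmono : ∀ {s t : ℕ}, s ≤ t → (I ^ t • ⊤ : Submodule R M) ≤ I ^ s • ⊤ :=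
    fun hst => Submodule.smul_mono_left (Ideal.pow_le_pow_right hst)
  set y : ℕ → M := fun s => G^[s] 0
  have hy : ∀ s, y (s + 1) = G (y s) := fun s => Function.iterate_succ_apply' G s 0
  have hstep : ∀ s, y s ≡ y (s + 1) [SMOD (I ^ s • ⊤ : Submodule R M)] := by
    intro s
    induction s with
    | zero => simp [SModEq.top]
    | succ s ih => rw [hy, hy]; exact hG s _ _ ih
  have hcauchy : ∀ {s t : ℕ}, s ≤ t → y s ≡ y t [SMOD (I ^ s • ⊤ : Submodule R M)] := by
    intro s t hst
    induction t, hst using Nat.le_induction with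
    | base => rfl
    | succ t hst ih => exact ih.trans ((hstep t).mono (hmono hst))
  obtain ⟨L, hL⟩ := IsPrecomplete.prec inferInstance hcauchy
  refine ⟨L, (IsHausdorff.eq_iff_smodEq (I := I)).2 fun s => ?_⟩
  have hGL : G L ≡ L [SMOD (I ^ (s + 1) • ⊤ : Submodule R M)] :=
    (hG s _ _ (hL s).symm).trans (hy s ▸ hL (s + 1))
  exact hGL.mono (hmono s.le_succ)

open scoped Polynomial PowerSeries

namespace PowerSeries

variable {R : Type*}

theorem X_pow_dvd_iff_le_order [Semiring R] {n : ℕ} {φ : R⟦X⟧} :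
    X ^ n ∣ φ ↔ (n : ℕ∞) ≤ φ.order := by
  rw [order_eq_emultiplicity_X, pow_dvd_iff_le_emultiplicity]

theorem smodEq_span_X_pow_iff [CommRing R] {n : ℕ} {φ ψ : R⟦X⟧} :
    φ ≡ ψ [SMOD (Ideal.span {(X : R⟦X⟧)} ^ n • ⊤ : Submodule R⟦X⟧ R⟦X⟧)] ↔ X ^ n ∣ φ - ψ := by
  rw [SModEq.sub_mem, Ideal.smul_eq_mul, Ideal.mul_top, Ideal.span_singleton_pow,
    Ideal.mem_span_singleton]

theorem order_eq_of_X_pow_dvd_sub [Ring R] {N : ℕ} {φ ψ : R⟦X⟧} (hφ : φ.order < N)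
    (h : X ^ N ∣ ψ - φ) : ψ.order = φ.order := by
  have hlt : φ.order < (ψ - φ).order := hφ.trans_le (X_pow_dvd_iff_le_order.1 h)
  rw [← add_sub_cancel φ ψ, order_add_of_order_ne _ _ hlt.ne, min_eq_left hlt.le]

theorem exists_isUnit_eq_X_pow_mul_of_order_eq {k : Type*} [Field k] {φ : k⟦X⟧} {m : ℕ}
    (h : φ.order = m) : ∃ u, IsUnit u ∧ φ = X ^ m * u := by
  have hφ : φ ≠ 0 := by rintro rfl; simp at h
  refine ⟨divXPowOrder φ, ?_, ?_⟩
  · rw [isUnit_iff_constantCoeff, isUnit_iff_ne_zero, Ne, constantCoeff_divXPowOrder_eq_zero_iff]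
    exact hφ
  · conv_lhs => rw [← X_pow_order_mul_divXPowOrder (f := φ)]
    simp [h]

theorem exists_eval_add_X_pow_mul_sub_eval [CommRing R] (P : R⟦X⟧[X]) {a₀ u : R⟦X⟧}
    {m E : ℕ} (hmE : m < E) (hP' : P.derivative.eval a₀ = X ^ m * u) (y y' : R⟦X⟧) :
    ∃ A, P.eval (a₀ + X ^ E * y) - P.eval (a₀ + X ^ E * y')
      = X ^ (m + E) * ((y - y') * (u + X * A)) := by
  obtain ⟨q, hq⟩ := P.binomExpansion (a₀ + X ^ E * y') (X ^ E * (y - y'))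
  obtain ⟨B, hB⟩ := Polynomial.sub_dvd_eval_sub (a₀ + X ^ E * y') a₀ P.derivative
  obtain ⟨d, rfl⟩ : ∃ d, E = m + 1 + d := ⟨E - (m + 1), by omega⟩
  refine ⟨X ^ d * (y' * B + q * (y - y')), ?_⟩
  rw [show a₀ + X ^ (m + 1 + d) * y = a₀ + X ^ (m + 1 + d) * y' + X ^ (m + 1 + d) * (y - y')
    by ring, hq, eq_add_of_sub_eq hB, hP']
  ring

theorem exists_isRoot_add_of_derivative_eq_X_pow_mul [CommRing R] {P : R⟦X⟧[X]} {a₀ u : R⟦X⟧}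
    {m E : ℕ} (hmE : m < E) (hu : IsUnit u) (hP' : P.derivative.eval a₀ = X ^ m * u)
    (hP : X ^ (m + E) ∣ P.eval a₀) : ∃ x, X ^ E ∣ x ∧ P.IsRoot (a₀ + x) := by
  have hdvd : ∀ y, X ^ (m + E) ∣ P.eval (a₀ + X ^ E * y) := fun y => by
    obtain ⟨A, hA⟩ := exists_eval_add_X_pow_mul_sub_eval P hmE hP' y 0
    simpa using dvd_add (Dvd.intro _ hA.symm) hP
  choose ψ hψ using hdvd
  have hψ_sub : ∀ y y', ∃ A, ψ y - ψ y' = (y - y') * (u + X * A) := fun y y' => by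
    obtain ⟨A, hA⟩ := exists_eval_add_X_pow_mul_sub_eval P hmE hP' y y'
    exact ⟨A, X_pow_mul_cancel (by rw [mul_sub, ← hψ, ← hψ, hA])⟩
  obtain ⟨v, hv⟩ := hu.exists_left_inv
  -- `ψ y = P(a₀ + X ^ E * y) / X ^ (m + E)` has slope `≡ u mod X`, so the rescaled Newton map
  -- `y ↦ y - u⁻¹ ψ y` is an `X`-adic contraction
  obtain ⟨L, hL⟩ := IsAdicComplete.exists_isFixedPt (I := Ideal.span {X})
    (G := fun y => y - v * ψ y) fun N y y' h => by
      rw [smodEq_span_X_pow_iff] at h ⊢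
      obtain ⟨A, hA⟩ := hψ_sub y y'
      rw [show y - v * ψ y - (y' - v * ψ y') = -(X * ((y - y') * (v * A))) by
        linear_combination (-v) * hA - (y - y') * hv, pow_succ']
      exact (mul_dvd_mul_left X (dvd_mul_of_dvd_left h _)).neg_right
  have hψL : ψ L = 0 := by
    have hvψ : v * ψ L = 0 := by simpa [Function.IsFixedPt] using hL
    rw [← one_mul (ψ L), ← hv, mul_comm v, mul_assoc, hvψ, mul_zero]
  exact ⟨X ^ E * L, dvd_mul_right _ _, by rw [Polynomial.IsRoot, hψ, hψL, mul_zero]⟩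

theorem eq_of_isRoot_of_order_derivative_lt [CommRing R] [IsDomain R] {P : R⟦X⟧[X]}
    {x y : R⟦X⟧} {E : ℕ} (hx : P.IsRoot x) (hy : P.IsRoot y) (hxy : X ^ E ∣ y - x)
    (hP' : (P.derivative.eval x).order < E) : x = y := by
  obtain ⟨q, hq⟩ := P.binomExpansion x (y - x)
  rw [add_sub_cancel, hx.eq_zero, hy.eq_zero] at hq
  have hfactor : (y - x) * (P.derivative.eval x + q * (y - x)) = 0 := by linear_combination -hq
  rcases mul_eq_zero.1 hfactor with h | h
  · exact (sub_eq_zero.1 h).symm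
  · have : X ^ E ∣ P.derivative.eval x := by
      rw [eq_neg_of_add_eq_zero_left h]
      exact (dvd_mul_of_dvd_right hxy q).neg_right
    exact absurd (X_pow_dvd_iff_le_order.1 this) hP'.not_ge

end PowerSeries

namespace MvPolynomial

variable {σ S R : Type*} [CommSemiring S] [CommRing R] [Algebra S R]

theorem dvd_aeval_sub_aeval {t : R} {u v : σ → R} (h : ∀ j, t ∣ u j - v j)
    (g : MvPolynomial σ S) : t ∣ aeval u g - aeval v g := by
  induction g using MvPolynomial.induction_on with
  | C c => simp
  | add p q hp hq => simpa [add_sub_add_comm] using dvd_add hp hq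
  | mul_X p j hp =>
    rw [show aeval u (p * X j) - aeval v (p * X j)
      = (aeval u p - aeval v p) * u j + aeval v p * (u j - v j) by simp; ring]
    exact dvd_add (dvd_mul_of_dvd_left hp _) (dvd_mul_of_dvd_right (h j) _)

theorem sq_dvd_aeval_sub_aeval_sub_sum_pderiv [Fintype σ] {t : R} {u v : σ → R}
    (h : ∀ j, t ∣ u j - v j) (g : MvPolynomial σ S) :
    t ^ 2 ∣ aeval u g - aeval v g - ∑ j, aeval v (pderiv j g) * (u j - v j) := by
  classical
  induction g using MvPolynomial.induction_on with
  | C c => simp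
  | add p q hp hq =>
    convert dvd_add hp hq using 1
    simp only [map_add, add_mul, Finset.sum_add_distrib]
    ring
  | mul_X p i hp =>
    have hsum : ∑ j, aeval v (pderiv j (p * X i)) * (u j - v j)
        = (∑ j, aeval v (pderiv j p) * (u j - v j)) * v i + aeval v p * (u i - v i) := by
      simp only [pderiv_mul, pderiv_X, Pi.single_apply, mul_ite, mul_one, mul_zero, map_add,
        map_mul, aeval_X, add_mul, Finset.sum_add_distrib, Finset.sum_mul]
      simp [apply_ite (aeval v), mul_right_comm _ (v i)]
    rw [hsum]
    convert dvd_add (dvd_mul_of_dvd_left hp (v i))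
      (sq t ▸ mul_dvd_mul (dvd_aeval_sub_aeval h p) (h i)) using 1
    simp
    ring

theorem mul_dvd_aeval_sub_aeval [Fintype σ] {s t : R} {u v : σ → R} {g : MvPolynomial σ S}
    (hst : s ∣ t) (h : ∀ j, t ∣ u j - v j) (hg : ∀ j, s ∣ aeval v (pderiv j g)) :
    s * t ∣ aeval u g - aeval v g := by
  have hsq : s * t ∣ t ^ 2 := sq t ▸ mul_dvd_mul_right hst t
  have hsum : s * t ∣ ∑ j, aeval v (pderiv j g) * (u j - v j) :=
    Finset.dvd_sum fun j _ => mul_dvd_mul (hg j) (h j)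
  simpa using dvd_add (hsq.trans (sq_dvd_aeval_sub_aeval_sub_sum_pderiv h g)) hsum

variable [DecidableEq σ]

noncomputable def restrictLine (x : σ → R) (i : σ) (p : MvPolynomial σ S) : R[X] :=
  aeval (fun j => if j = i then Polynomial.X else Polynomial.C (x j)) p

theorem eval_restrictLine (x : σ → R) (i : σ) (p : MvPolynomial σ S) (y : R) :
    (restrictLine x i p).eval y = aeval (Function.update x i y) p := by
  induction p using MvPolynomial.induction_on with
  | C c => simp [restrictLine]
  | add p q hp hq => simp_all [restrictLine]
  | mul_X p j hp =>
    simp_all [restrictLine, Function.update_apply, apply_ite (Polynomial.eval y)]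

theorem derivative_restrictLine (x : σ → R) (i : σ) (p : MvPolynomial σ S) :
    (restrictLine x i p).derivative = restrictLine x i (pderiv i p) := by
  induction p using MvPolynomial.induction_on with
  | C c => simp [restrictLine]
  | add p q hp hq => simp_all [restrictLine]
  | mul_X p j hp =>
    by_cases hj : j = i <;> simp_all [restrictLine, mul_comm]

end MvPolynomial

section ArcFibre

open PowerSeries
open MvPolynomial (aeval pderiv restrictLine eval_restrictLine derivative_restrictLine)

def arcFibre {σ R : Type*} [CommRing R] (f : MvPolynomial σ R) (a : σ → R⟦X⟧) (N : ℕ) :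
    Set (σ → R⟦X⟧) :=
  {b | aeval b f = 0 ∧ ∀ j, X ^ N ∣ b j - a j}

variable {k : Type*} [Field k]

theorem order_aeval_pderiv_eq {σ : Type*} {f : MvPolynomial σ k} {a b : σ → k⟦X⟧} {i : σ}
    {m E : ℕ} (hmE : m < E) (hi : (aeval a (pderiv i f)).order = m)
    (hb : ∀ j, X ^ E ∣ b j - a j) : (aeval b (pderiv i f)).order = m := by
  rw [order_eq_of_X_pow_dvd_sub (hi ▸ by exact_mod_cast hmE)
    (MvPolynomial.dvd_aeval_sub_aeval hb _), hi]

variable {n : ℕ} {f : MvPolynomial (Fin (n + 1)) k} {a : Fin (n + 1) → k⟦X⟧} {i : Fin (n + 1)}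
  {m E : ℕ}

theorem injOn_arcFibre (hmE : m < E) (hi : (aeval a (pderiv i f)).order = m) :
    Set.InjOn (fun b j => b (i.succAbove j) - a (i.succAbove j)) (arcFibre f a E) := by
  intro b hb b' hb' hbb'
  have hoff : ∀ j ≠ i, b j = b' j := fun j hj => by
    obtain ⟨j, rfl⟩ := Fin.exists_succAbove_eq hj
    exact sub_left_inj.1 (congrFun hbb' j)
  suffices b i = b' i from funext fun j => (eq_or_ne j i).elim (· ▸ this) (hoff j)
  refine eq_of_isRoot_of_order_derivative_lt (P := restrictLine b i f) (E := E) ?_ ?_ ?_ ?_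
  · rw [Polynomial.IsRoot, eval_restrictLine, Function.update_eq_self]
    exact hb.1
  · rw [Polynomial.IsRoot, eval_restrictLine,
      Function.update_eq_iff.2 ⟨rfl, hoff⟩]
    exact hb'.1
  · simpa using dvd_sub (hb'.2 i) (hb.2 i)
  · rw [derivative_restrictLine, eval_restrictLine, Function.update_eq_self,
      order_aeval_pderiv_eq hmE hi hb.2]
    exact_mod_cast hmE

theorem surjOn_arcFibre (ha : aeval a f = 0) (hmE : m < E)
    (hi : (aeval a (pderiv i f)).order = m) (hdvd : ∀ j, X ^ m ∣ aeval a (pderiv j f)) :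
    Set.SurjOn (fun b j => b (i.succAbove j) - a (i.succAbove j)) (arcFibre f a E)
      {c | ∀ j, X ^ E ∣ c j} := by
  intro c hc
  set b₀ : Fin (n + 1) → k⟦X⟧ := fun j => a j + i.insertNth (α := fun _ => k⟦X⟧) 0 c j
  have hb₀ : ∀ j, X ^ E ∣ b₀ j - a j := fun j => by
    induction j using Fin.succAboveCases i <;> simp [b₀, hc _]
  have hb₀i : b₀ i = a i := by simp [b₀]
  have hP' : (restrictLine b₀ i f).derivative.eval (a i) = aeval b₀ (pderiv i f) := by
    rw [derivative_restrictLine, eval_restrictLine, ← hb₀i, Function.update_eq_self]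
  obtain ⟨u, hu, hP'u⟩ :=
    exists_isUnit_eq_X_pow_mul_of_order_eq (order_aeval_pderiv_eq hmE hi hb₀)
  have hP : X ^ (m + E) ∣ (restrictLine b₀ i f).eval (a i) := by
    rw [eval_restrictLine, ← hb₀i, Function.update_eq_self, pow_add]
    simpa [ha] using MvPolynomial.mul_dvd_aeval_sub_aeval (pow_dvd_pow X hmE.le) hb₀ hdvd
  obtain ⟨x, hxE, hx⟩ :=
    exists_isRoot_add_of_derivative_eq_X_pow_mul hmE hu (hP'.trans hP'u) hP
  refine ⟨Function.update b₀ i (a i + x), ⟨?_, fun j => ?_⟩, funext fun j => ?_⟩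
  · rwa [← eval_restrictLine]
  · rcases eq_or_ne j i with rfl | hj
    · simpa using hxE
    · simpa [Function.update_of_ne hj] using hb₀ j
  · simp [b₀]

end ArcFibre

theorem hypersurface_arc_fibre_trivial_general
    {k : Type} [Field k] {n : ℕ}
    (f : MvPolynomial (Fin n) k) (a : Fin n → PowerSeries k)
    (ha : MvPolynomial.aeval a f = 0)
    (e : ℕ)
    (he : ∃ i, PowerSeries.order (MvPolynomial.aeval a (MvPolynomial.pderiv i f)) ≤ (e : ℕ∞)) :
    Nonempty
      ({b : Fin n → PowerSeries k //
          MvPolynomial.aeval b f = 0 ∧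
          ∀ i, ((e : ℕ∞) + 1) ≤ PowerSeries.order (b i - a i)} ≃
       {c : Fin (n - 1) → PowerSeries k //
          ∀ i, ((e : ℕ∞) + 1) ≤ PowerSeries.order (c i)}) := by
  obtain ⟨i₀, hi₀⟩ := he
  cases n with
  | zero => exact i₀.elim0
  | succ n =>
    obtain ⟨i, -, hmin⟩ := Finset.univ.exists_min_image
      (fun j => (MvPolynomial.aeval a (MvPolynomial.pderiv j f)).order) ⟨i₀, Finset.mem_univ _⟩
    obtain ⟨m, hm, hme⟩ := ENat.le_natCast_iff.1 ((hmin i₀ (Finset.mem_univ _)).trans hi₀)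
    have hdvd : ∀ j, PowerSeries.X ^ m ∣ MvPolynomial.aeval a (MvPolynomial.pderiv j f) :=
      fun j => PowerSeries.X_pow_dvd_iff_le_order.2 (hm ▸ hmin j (Finset.mem_univ j))
    have hbij : Set.BijOn (fun b j => b (i.succAbove j) - a (i.succAbove j))
        (arcFibre f a (e + 1)) {c | ∀ j, PowerSeries.X ^ (e + 1) ∣ c j} :=
      ⟨fun b hb j => hb.2 _, injOn_arcFibre (by omega) hm,
        surjOn_arcFibre ha (by omega) hm hdvd⟩
    have hord : ∀ z : PowerSeries k, (e : ℕ∞) + 1 ≤ z.order ↔ PowerSeries.X ^ (e + 1) ∣ z :=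
      fun z => by rw [PowerSeries.X_pow_dvd_iff_le_order]; push_cast; rfl
    exact ⟨(Equiv.subtypeEquivRight fun b => by simp only [arcFibre, hord]; rfl).trans
      ((hbij.equiv _).trans (Equiv.subtypeEquivRight fun c => by simp only [hord]; rfl))⟩

/-- **Fibre triviality for arcs on a hypersurface.**
Let `f ∈ k[x_1,…,x_n]` and `a ∈ k[[t]]^n` an arc with `f(a) = 0` such that
`e' = min_i ord_t(∂_i f(a))` is finite and `≤ e`.  Then the fibre of the truncation map
over `a`, i.e. `{b : f(b) = 0, b ≡ a mod (t)^{e+1}}`, is in bijection with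
`((t)^{e+1}·k[[t]])^{n−1}`. -/
theorem hypersurface_arc_fibre_trivial
    {k : Type} [Field k] [CharZero k] {n : ℕ}
    (f : MvPolynomial (Fin n) k) (a : Fin n → PowerSeries k)
    (ha : MvPolynomial.aeval a f = 0)
    (e : ℕ)
    (he : ∃ i, PowerSeries.order (MvPolynomial.aeval a (MvPolynomial.pderiv i f)) ≤ (e : ℕ∞)) :
    Nonempty
      ({b : Fin n → PowerSeries k //
          MvPolynomial.aeval b f = 0 ∧
          ∀ i, ((e : ℕ∞) + 1) ≤ PowerSeries.order (b i - a i)} ≃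
       {c : Fin (n - 1) → PowerSeries k //
          ∀ i, ((e : ℕ∞) + 1) ≤ PowerSeries.order (c i)}) :=
  hypersurface_arc_fibre_trivial_general f a ha e he
end

section
/- Deformations of an arc on the hypersurface y·x_{n+1} + f(x_1,…,x_n) = 0 over a test-ring: Let k be a field, A a test-ring over k (local commutative unital k-algebra with nilpotent maximal ideal m_A and residue field k), and f ∈ k[x_1,…,x_n] with f(0) = 0. Let α ∈ m_A, u ∈ A[[t]]^× a unit, and x_1(t),…,x_n(t) ∈ m_A[[t]] power series all of whose coefficients lie in m_A. Then there exists at most one y(t) ∈ m_A[[t]] such that y(t)·u(t)·(t − α) + f(x_1(t),…,x_n(t)) = 0; moreover such a y(t) exists if and only if f(x_1(α),…,x_n(α)) = 0, where x_i(α) denotes the (well-defined, since α is nilpotent) evaluation of x_i(t) at t = α. -/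
/-!
Since `α` is nilpotent, `X - C α` is a non-zero-divisor of `A⟦X⟧`: a power series `K` with
`(X - C α) * K` constant satisfies `K_j = α K_{j+1} = ⋯ = α ^ N K_{j+N} = 0`. This gives uniqueness.
Moreover `X ^ N ≡ α ^ N = 0` modulo `X - C α`, so every `F` is congruent to its truncation
below degree `N`, hence to the constant `F(α)`. Thus evaluation at `α` is the ring map
`A⟦X⟧ → A⟦X⟧ ⧸ (X - C α) ≅ A`, and `X - C α ∣ F` iff `F(α) = 0`; applied to
`F = f(x_1, …, x_n)` it commutes with `f`. Finally, reducing modulo `m_A` turns `X - C α` into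
`X` and, as `f(0) = 0`, kills `F`, so the quotient `F / (X - C α)` has coefficients in `m_A`.
-/

open Finset

namespace MvPolynomial

theorem aeval_mem_of_constantCoeff_eq_zero {σ R S : Type*} [CommSemiring R] [CommRing S]
    [Algebra R S] {I : Ideal S} {x : σ → S} (hx : ∀ i, x i ∈ I) {f : MvPolynomial σ R}
    (hf : constantCoeff f = 0) : aeval x f ∈ I := by
  have hx0 : (fun i => Ideal.Quotient.mkₐ R I (x i)) = 0 := by
    ext i
    exact Ideal.Quotient.eq_zero_iff_mem.2 (hx i)
  rw [← Ideal.Quotient.eq_zero_iff_mem, ← Ideal.Quotient.mkₐ_eq_mk R, comp_aeval_apply, hx0,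
    aeval_zero, hf, map_zero]

end MvPolynomial

namespace PowerSeries

variable {A : Type*} [CommRing A] {α : A}

theorem map_mk_eq_zero_iff {I : Ideal A} {F : A⟦X⟧} :
    map (Ideal.Quotient.mk I) F = 0 ↔ ∀ j, coeff j F ∈ I := by
  simp only [PowerSeries.ext_iff, coeff_map, map_zero, Ideal.Quotient.eq_zero_iff_mem]

theorem map_mk_eq_zero_of_X_sub_C_mul {I : Ideal A} (hα : α ∈ I) {G : A⟦X⟧}
    (h : map (Ideal.Quotient.mk I) ((X - C α) * G) = 0) : map (Ideal.Quotient.mk I) G = 0 := by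
  rw [map_mul, map_sub, map_X, map_C, Ideal.Quotient.eq_zero_iff_mem.2 hα, map_zero, sub_zero,
    ← mul_zero X] at h
  exact X_mul_cancel h

theorem coeff_succ_X_sub_C_mul (K : A⟦X⟧) (j : ℕ) :
    coeff (j + 1) ((X - C α) * K) = coeff j K - α * coeff (j + 1) K := by
  rw [sub_mul, map_sub, coeff_succ_X_mul, coeff_C_mul]

theorem eq_zero_of_X_sub_C_mul_eq_C (hα : IsNilpotent α) {K : A⟦X⟧} {c : A}
    (h : (X - C α) * K = C c) : K = 0 := by
  obtain ⟨N, hN⟩ := hα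
  have step (j : ℕ) : coeff j K = α * coeff (j + 1) K := by
    have := coeff_succ_X_sub_C_mul (α := α) K j
    rw [h, coeff_C, if_neg j.succ_ne_zero] at this
    exact sub_eq_zero.1 this.symm
  have shift (m j : ℕ) : coeff j K = α ^ m * coeff (j + m) K := by
    induction m generalizing j with
    | zero => simp
    | succ m ih => rw [step, ih (j + 1), pow_succ', mul_assoc, add_assoc, add_comm 1 m]
  ext j
  rw [shift N, hN, zero_mul, map_zero]

theorem X_sub_C_mem_nonZeroDivisors (hα : IsNilpotent α) : X - C α ∈ nonZeroDivisors A⟦X⟧ :=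
  mem_nonZeroDivisors_iff_left.2 fun K hK =>
    eq_zero_of_X_sub_C_mul_eq_C hα (c := 0) (by rw [hK, map_zero])

variable {N : ℕ}

theorem X_sub_C_dvd_sub_C_sum (hα : α ^ N = 0) (F : A⟦X⟧) :
    X - C α ∣ F - C (∑ j ∈ range N, coeff j F * α ^ j) := by
  have hpow : X - C α ∣ (X : A⟦X⟧) ^ N := by
    simpa [← map_pow, hα] using sub_dvd_pow_sub_pow (X : A⟦X⟧) (C α) N
  have htrunc : X - C α ∣ (trunc N F : A⟦X⟧) - C ((trunc N F).eval α) := by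
    simpa using map_dvd (Polynomial.coeToPowerSeries.ringHom (R := A))
      (Polynomial.X_sub_C_dvd_sub_C_eval (a := α) (p := trunc N F))
  have heval : (trunc N F).eval α = ∑ j ∈ range N, coeff j F * α ^ j := by
    simp [trunc_apply, Polynomial.eval_finsetSum]
  rw [← heval]
  nth_rw 1 [eq_X_pow_mul_shift_add_trunc N F]
  rw [add_sub_assoc]
  exact dvd_add (hpow.mul_right _) htrunc

theorem sum_coeff_mul_pow_eq_of_dvd (hα : α ^ N = 0) {F : A⟦X⟧} {c : A}
    (h : X - C α ∣ F - C c) : ∑ j ∈ range N, coeff j F * α ^ j = c := by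
  obtain ⟨K, hK⟩ := dvd_sub h (X_sub_C_dvd_sub_C_sum hα F)
  rw [sub_sub_sub_cancel_left, ← map_sub] at hK
  have hK0 := eq_zero_of_X_sub_C_mul_eq_C ⟨N, hα⟩ hK.symm
  rw [hK0, mul_zero, map_eq_zero_iff _ C_injective, sub_eq_zero] at hK
  exact hK

noncomputable def evalNilpotent (hα : α ^ N = 0) : A⟦X⟧ →ₐ[A] A where
  toFun F := ∑ j ∈ range N, coeff j F * α ^ j
  map_one' := sum_coeff_mul_pow_eq_of_dvd hα (by simp)
  map_mul' F G := sum_coeff_mul_pow_eq_of_dvd hα <| by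
    convert dvd_add ((X_sub_C_dvd_sub_C_sum hα F).mul_right G)
      ((X_sub_C_dvd_sub_C_sum hα G).mul_left (C (∑ j ∈ range N, coeff j F * α ^ j))) using 1
    rw [map_mul]
    ring
  map_zero' := by simp
  map_add' F G := by simp [add_mul, sum_add_distrib]
  commutes' a := sum_coeff_mul_pow_eq_of_dvd hα (by simp)

theorem evalNilpotent_apply (hα : α ^ N = 0) (F : A⟦X⟧) :
    evalNilpotent hα F = ∑ j ∈ range N, coeff j F * α ^ j :=
  rfl

theorem X_sub_C_dvd_iff_evalNilpotent_eq_zero (hα : α ^ N = 0) {F : A⟦X⟧} :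
    X - C α ∣ F ↔ evalNilpotent hα F = 0 := by
  refine ⟨fun h => sum_coeff_mul_pow_eq_of_dvd hα (by simpa using h), fun h => ?_⟩
  have := X_sub_C_dvd_sub_C_sum hα F
  rwa [← evalNilpotent_apply hα, h, map_zero, sub_zero] at this

end PowerSeries

open PowerSeries

theorem test_ring_deformation_hypersurface_general
    {k : Type} [Field k]
    {A : Type} [CommRing A] [Algebra k A] [IsLocalRing A]
    (N : ℕ) (hN : (IsLocalRing.maximalIdeal A) ^ N = ⊥)
    {n : ℕ} (f : MvPolynomial (Fin n) k) (hf0 : MvPolynomial.constantCoeff f = 0)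
    (α : A) (hα : α ∈ IsLocalRing.maximalIdeal A)
    (u : PowerSeries A) (hu : IsUnit u)
    (x : Fin n → PowerSeries A)
    (hx : ∀ i j, PowerSeries.coeff j (x i) ∈ IsLocalRing.maximalIdeal A) :
    (∀ y₁ y₂ : PowerSeries A,
      (∀ j, PowerSeries.coeff j y₁ ∈ IsLocalRing.maximalIdeal A) →
      (∀ j, PowerSeries.coeff j y₂ ∈ IsLocalRing.maximalIdeal A) →
      y₁ * u * (PowerSeries.X - PowerSeries.C α) + MvPolynomial.aeval x f = 0 →
      y₂ * u * (PowerSeries.X - PowerSeries.C α) + MvPolynomial.aeval x f = 0 →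
      y₁ = y₂) ∧
    ((∃ y : PowerSeries A,
        (∀ j, PowerSeries.coeff j y ∈ IsLocalRing.maximalIdeal A) ∧
        y * u * (PowerSeries.X - PowerSeries.C α) + MvPolynomial.aeval x f = 0) ↔
      MvPolynomial.aeval
        (fun i => ∑ j ∈ Finset.range N, PowerSeries.coeff j (x i) * α ^ j) f = 0) := by
  have hαN : α ^ N = 0 := by simpa [hN] using Ideal.pow_mem_pow hα N
  set ψ := map (Ideal.Quotient.mk (IsLocalRing.maximalIdeal A))
  have hF : ψ (MvPolynomial.aeval x f) = 0 :=
    MvPolynomial.aeval_mem_of_constantCoeff_eq_zero (I := RingHom.ker ψ)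
      (fun i => map_mk_eq_zero_iff.2 (hx i)) hf0
  change _ ∧ (_ ↔ MvPolynomial.aeval (fun i => (evalNilpotent hαN).restrictScalars k (x i)) f = 0)
  rw [← MvPolynomial.comp_aeval_apply, AlgHom.restrictScalars_apply,
    ← X_sub_C_dvd_iff_evalNilpotent_eq_zero hαN]
  refine ⟨fun y₁ y₂ _ _ h₁ h₂ => ?_, fun ⟨y, _, hy⟩ => ⟨-(y * u), by linear_combination hy⟩,
    fun ⟨G, hG⟩ => ?_⟩
  · have h : y₁ * u * (X - C α) = y₂ * u * (X - C α) := by linear_combination h₁ - h₂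
    have hreg : X - C α ∈ nonZeroDivisors A⟦X⟧ := X_sub_C_mem_nonZeroDivisors ⟨N, hαN⟩
    exact hu.mul_left_inj.1 ((mul_cancel_right_mem_nonZeroDivisors hreg).1 h)
  · obtain ⟨v, rfl⟩ := hu
    have hG0 : ψ G = 0 := map_mk_eq_zero_of_X_sub_C_mul hα (by rw [← hG]; exact hF)
    refine ⟨-(↑v⁻¹ * G), map_mk_eq_zero_iff.1 (by simp [ψ, hG0]), ?_⟩
    linear_combination (-(G * (X - C α))) * v.inv_mul + hG

/-- **Deformations over a test-ring (Grinberg–Kazhdan–Drinfeld example).**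
Let `A` be a test-ring over `k` (local `k`-algebra with nilpotent maximal ideal and residue
field `k`), `f ∈ k[x_1,…,x_n]` with `f(0) = 0`, `α ∈ m_A`, `u ∈ A[[t]]ˣ` and
`x_i(t) ∈ m_A[[t]]`.  Then there is at most one `y(t) ∈ m_A[[t]]` with
`y(t)·u(t)·(t − α) + f(x_1(t),…,x_n(t)) = 0`, and such `y(t)` exists if and only if
`f(x_1(α),…,x_n(α)) = 0`. -/
theorem test_ring_deformation_hypersurface
    {k : Type} [Field k]
    {A : Type} [CommRing A] [Algebra k A] [IsLocalRing A]
    (N : ℕ) (hN : (IsLocalRing.maximalIdeal A) ^ N = ⊥)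
    (hres : Function.Bijective
      (fun c : k => IsLocalRing.residue A (algebraMap k A c)))
    {n : ℕ} (f : MvPolynomial (Fin n) k) (hf0 : MvPolynomial.constantCoeff f = 0)
    (α : A) (hα : α ∈ IsLocalRing.maximalIdeal A)
    (u : PowerSeries A) (hu : IsUnit u)
    (x : Fin n → PowerSeries A)
    (hx : ∀ i j, PowerSeries.coeff j (x i) ∈ IsLocalRing.maximalIdeal A) :
    (∀ y₁ y₂ : PowerSeries A,
      (∀ j, PowerSeries.coeff j y₁ ∈ IsLocalRing.maximalIdeal A) →
      (∀ j, PowerSeries.coeff j y₂ ∈ IsLocalRing.maximalIdeal A) →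
      y₁ * u * (PowerSeries.X - PowerSeries.C α) + MvPolynomial.aeval x f = 0 →
      y₂ * u * (PowerSeries.X - PowerSeries.C α) + MvPolynomial.aeval x f = 0 →
      y₁ = y₂) ∧
    ((∃ y : PowerSeries A,
        (∀ j, PowerSeries.coeff j y ∈ IsLocalRing.maximalIdeal A) ∧
        y * u * (PowerSeries.X - PowerSeries.C α) + MvPolynomial.aeval x f = 0) ↔
      MvPolynomial.aeval
        (fun i => ∑ j ∈ Finset.range N, PowerSeries.coeff j (x i) * α ^ j) f = 0) :=
  test_ring_deformation_hypersurface_general N hN f hf0 α hα u hu x hx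
end

section
/- Existence and uniqueness of formal power series solutions of explicit polynomial ODE systems: Let k be a field of characteristic 0, q, n ≥ 1, and P_1,…,P_n polynomials over k in the qn indeterminates z_{j,l} (1 ≤ j ≤ n, 0 ≤ l ≤ q−1). Then for every choice of initial data c_{j,l} ∈ k (1 ≤ j ≤ n, 0 ≤ l ≤ q−1) there exists a unique vector x = (x_1,…,x_n) ∈ k[[t]]^n such that D^q x_j = P_j(x_1,…,x_n, Dx_1,…,Dx_n, …, D^{q−1}x_1,…,D^{q−1}x_n) for all j, and the constant term of D^l x_j equals c_{j,l} for all 1 ≤ j ≤ n and 0 ≤ l ≤ q−1. -/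
noncomputable section

/-- Formal differentiation on `k[[t]]`. -/
def D {k : Type} [Field k] : PowerSeries k → PowerSeries k :=
  fun a => PowerSeries.derivative k a

/-!
The coefficient of `t^(d+q)` of a solution is forced by the coefficients of the right-hand side
up to `t^d`, and those only involve coefficients of `x` below `t^(d+q)`, because a derivative of
order `< q` loses fewer than `q` orders of `t`. So the Picard map
`x ↦ Σ_{l<q} c_l t^l / l! + (q-fold integral of P(x, …, D^{q-1}x))` strictly improves
`t`-adic agreement, and its iterates converge coefficientwise to its unique fixed point.
-/

open PowerSeries
open scoped Nat

namespace PowerSeries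

variable {R : Type*} [CommRing R]

theorem X_pow_dvd_sub_iff {m : ℕ} {f g : R⟦X⟧} :
    X ^ m ∣ f - g ↔ ∀ i < m, coeff i f = coeff i g := by
  simp only [X_pow_dvd_iff, map_sub, sub_eq_zero]

theorem eq_of_forall_X_pow_dvd_sub {f g : R⟦X⟧} (h : ∀ m, X ^ m ∣ f - g) : f = g :=
  ext fun i => X_pow_dvd_sub_iff.1 (h (i + 1)) i i.lt_succ_self

theorem X_pow_sub_dvd_iterate_derivative {m : ℕ} {f : R⟦X⟧} (h : X ^ m ∣ f) (l : ℕ) :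
    X ^ (m - l) ∣ (d⁄dX R)^[l] f := by
  rw [X_pow_dvd_iff] at h ⊢
  intro i hi
  rw [coeff_iterate_derivative, h (i + l) (by omega), mul_zero]

end PowerSeries

theorem MvPolynomial.dvd_aeval_sub_aeval_s15 {σ R S : Type*} [CommSemiring R] [CommRing S]
    [Algebra R S] {a : S} {f g : σ → S} (h : ∀ v, a ∣ f v - g v) (p : MvPolynomial σ R) :
    a ∣ aeval f p - aeval g p := by
  induction p using MvPolynomial.induction_on with
  | C r => simp
  | add p r hp hr => simpa only [map_add, add_sub_add_comm] using dvd_add hp hr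
  | mul_X p v hp =>
    have key : aeval f p * f v - aeval g p * g v =
        aeval f p * (f v - g v) + (aeval f p - aeval g p) * g v := by ring
    simpa only [map_mul, aeval_X, key] using dvd_add ((h v).mul_left _) (hp.mul_right _)

section Contraction

variable {R ι : Type*} [CommRing R]

def XAdicContracting (Φ : (ι → R⟦X⟧) → ι → R⟦X⟧) : Prop :=
  ∀ m x y, (∀ j, (X : R⟦X⟧) ^ m ∣ x j - y j) → ∀ j, (X : R⟦X⟧) ^ (m + 1) ∣ Φ x j - Φ y j

namespace XAdicContracting

variable {Φ : (ι → R⟦X⟧) → ι → R⟦X⟧} (hΦ : XAdicContracting Φ)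
include hΦ

theorem X_pow_dvd_iterate_sub (m : ℕ) (x y : ι → R⟦X⟧) (j : ι) :
    X ^ m ∣ Φ^[m] x j - Φ^[m] y j := by
  induction m generalizing j with
  | zero => simp
  | succ m ih =>
    rw [Function.iterate_succ_apply', Function.iterate_succ_apply']
    exact hΦ m _ _ ih j

theorem eq_of_fixed {x y : ι → R⟦X⟧} (hx : Φ x = x) (hy : Φ y = y) : x = y :=
  funext fun j => eq_of_forall_X_pow_dvd_sub fun m => by
    simpa only [Function.iterate_fixed hx, Function.iterate_fixed hy] using
      hΦ.X_pow_dvd_iterate_sub m x y j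

theorem exists_fixed : ∃ x, Φ x = x := by
  set y : ℕ → ι → R⟦X⟧ := fun m => Φ^[m] 0
  have hy : ∀ m N, m ≤ N → ∀ j, X ^ m ∣ y N j - y m j := by
    intro m N h j
    obtain ⟨N, rfl⟩ := Nat.exists_eq_add_of_le h
    simpa only [y, Function.iterate_add_apply] using hΦ.X_pow_dvd_iterate_sub m (Φ^[N] 0) 0 j
  -- the coefficient of `X^i` of the iterates is constant from `y (i + 1)` on
  let x : ι → R⟦X⟧ := fun j => mk fun i => coeff i (y (i + 1) j)
  have hx : ∀ m j, X ^ m ∣ x j - y m j := fun m j => X_pow_dvd_sub_iff.2 fun i hi => by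
    rw [coeff_mk]
    exact (X_pow_dvd_sub_iff.1 (hy (i + 1) m hi j) i i.lt_succ_self).symm
  refine ⟨x, funext fun j => eq_of_forall_X_pow_dvd_sub fun m => ?_⟩
  cases m with
  | zero => simp
  | succ m =>
    have hΦy : Φ (y m) = y (m + 1) := (Function.iterate_succ_apply' Φ m 0).symm
    simpa only [hΦy, sub_sub_sub_cancel_right] using
      dvd_sub (hΦ m _ _ (hx m) j) (hx (m + 1) j)

theorem existsUnique_fixed : ∃! x, Φ x = x :=
  let ⟨x, hx⟩ := hΦ.exists_fixed
  ⟨x, hx, fun _ hy => hΦ.eq_of_fixed hy hx⟩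

end XAdicContracting

end Contraction

theorem Nat.cast_ascFactorial_ne_zero {R : Type*} [AddMonoidWithOne R] [CharZero R] (n m : ℕ) :
    ((n + 1).ascFactorial m : R) ≠ 0 :=
  Nat.cast_ne_zero.2 (Nat.ascFactorial_pos n m).ne'

section PicardMap

variable {k ι : Type*} [Field k] (q : ℕ)

/-- The Picard map of `D^q x = F x` with initial data `c`: it keeps the first `q` coefficients
prescribed by `c` and integrates `F x` `q` times. -/
def picardMap (F : (ι → k⟦X⟧) → ι → k⟦X⟧) (c : ι × Fin q → k) (x : ι → k⟦X⟧) : ι → k⟦X⟧ :=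
  fun j => mk fun m =>
    if h : m < q then c (j, ⟨m, h⟩) / (m ! : k)
    else ((m - q + 1).ascFactorial q : k)⁻¹ * coeff (m - q) (F x j)

variable {q} {F : (ι → k⟦X⟧) → ι → k⟦X⟧} {c : ι × Fin q → k}

theorem coeff_picardMap_of_lt (x : ι → k⟦X⟧) (j : ι) {m : ℕ} (h : m < q) :
    coeff m (picardMap q F c x j) = c (j, ⟨m, h⟩) / (m ! : k) := by
  rw [picardMap, coeff_mk, dif_pos h]

theorem coeff_picardMap_add (x : ι → k⟦X⟧) (j : ι) (d : ℕ) :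
    coeff (d + q) (picardMap q F c x j) =
      ((d + 1).ascFactorial q : k)⁻¹ * coeff d (F x j) := by
  rw [picardMap, coeff_mk, dif_neg (by omega), Nat.add_sub_cancel]

theorem picardMap_eq_self_iff [CharZero k] (x : ι → k⟦X⟧) :
    picardMap q F c x = x ↔
      (∀ j, (d⁄dX k)^[q] (x j) = F x j) ∧
        ∀ j (l : Fin q), constantCoeff ((d⁄dX k)^[l] (x j)) = c (j, l) := by
  have hfac (m : ℕ) : (m ! : k) ≠ 0 := Nat.cast_ne_zero.2 m.factorial_ne_zero
  constructor
  · intro hx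
    refine ⟨fun j => ext fun d => ?_, fun j l => ?_⟩
    · rw [coeff_iterate_derivative, ← congrFun hx j, coeff_picardMap_add,
        mul_inv_cancel_left₀ (Nat.cast_ascFactorial_ne_zero d q)]
    · rw [constantCoeff_iterate_derivative, ← congrFun hx j, coeff_picardMap_of_lt _ _ l.isLt,
        mul_div_cancel₀ _ (hfac l)]
  · rintro ⟨hode, hinit⟩
    funext j
    ext m
    rcases lt_or_ge m q with h | h
    · rw [coeff_picardMap_of_lt _ _ h, ← hinit j ⟨m, h⟩, constantCoeff_iterate_derivative,
        mul_div_cancel_left₀ _ (hfac m)]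
    · obtain ⟨d, rfl⟩ := Nat.exists_eq_add_of_le' h
      rw [coeff_picardMap_add, ← hode, coeff_iterate_derivative,
        inv_mul_cancel_left₀ (Nat.cast_ascFactorial_ne_zero d q)]

theorem picardMap_xAdicContracting
    (hF : ∀ m x y, (∀ j, (X : k⟦X⟧) ^ m ∣ x j - y j) → ∀ j, X ^ (m + 1 - q) ∣ F x j - F y j) :
    XAdicContracting (picardMap q F c) := by
  intro m x y hxy j
  rw [X_pow_dvd_sub_iff]
  intro i hi
  rcases lt_or_ge i q with h | h
  · rw [coeff_picardMap_of_lt _ _ h, coeff_picardMap_of_lt _ _ h]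
  · obtain ⟨d, rfl⟩ := Nat.exists_eq_add_of_le' h
    rw [coeff_picardMap_add, coeff_picardMap_add,
      X_pow_dvd_sub_iff.1 (hF m x y hxy j) d (by omega)]

theorem existsUnique_iterate_derivative_eq [CharZero k]
    (hF : ∀ m x y, (∀ j, (X : k⟦X⟧) ^ m ∣ x j - y j) → ∀ j, X ^ (m + 1 - q) ∣ F x j - F y j)
    (c : ι × Fin q → k) :
    ∃! x : ι → k⟦X⟧, (∀ j, (d⁄dX k)^[q] (x j) = F x j) ∧
      ∀ j (l : Fin q), constantCoeff ((d⁄dX k)^[l] (x j)) = c (j, l) :=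
  (existsUnique_congr picardMap_eq_self_iff).1 (picardMap_xAdicContracting hF).existsUnique_fixed

end PicardMap

theorem X_pow_dvd_aeval_iterate_derivative_sub {k ι : Type*} [Field k] {q : ℕ}
    (P : ι → MvPolynomial (ι × Fin q) k) (m : ℕ) (x y : ι → k⟦X⟧)
    (hxy : ∀ j, (X : k⟦X⟧) ^ m ∣ x j - y j) (j : ι) :
    X ^ (m + 1 - q) ∣ MvPolynomial.aeval (fun v => (d⁄dX k)^[v.2] (x v.1)) (P j) -
      MvPolynomial.aeval (fun v => (d⁄dX k)^[v.2] (y v.1)) (P j) := by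
  refine MvPolynomial.dvd_aeval_sub_aeval_s15 (fun v => ?_) (P j)
  rw [← iterate_map_sub]
  exact (pow_dvd_pow X (by omega)).trans (X_pow_sub_dvd_iterate_derivative (hxy v.1) v.2)

theorem D_eq_derivative {k : Type} [Field k] : (D : k⟦X⟧ → k⟦X⟧) = d⁄dX k := rfl

theorem polynomial_ODE_unique_solution_general
    {k : Type} [Field k] [CharZero k] (q n : ℕ)
    (P : Fin n → MvPolynomial (Fin n × Fin q) k)
    (c : Fin n × Fin q → k) :
    ∃! x : Fin n → PowerSeries k,
      (∀ j, D^[q] (x j) =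
        MvPolynomial.aeval (fun v : Fin n × Fin q => D^[(v.2 : ℕ)] (x v.1)) (P j)) ∧
      (∀ (j : Fin n) (l : Fin q),
        PowerSeries.constantCoeff (D^[(l : ℕ)] (x j)) = c (j, l)) := by
  rw [D_eq_derivative]
  exact existsUnique_iterate_derivative_eq (X_pow_dvd_aeval_iterate_derivative_sub P) c

/-- **Formal solutions of explicit polynomial ODE systems.**
Let `P_1,…,P_n` be polynomials in the `qn` indeterminates `z_{j,l}` (`1 ≤ j ≤ n`,
`0 ≤ l ≤ q−1`).  For every choice of initial data `c_{j,l} ∈ k` there is a unique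
`x = (x_1,…,x_n) ∈ k[[t]]^n` with
`D^q x_j = P_j(x, Dx, …, D^{q−1}x)` for all `j` and `(D^l x_j)(0) = c_{j,l}`. -/
theorem polynomial_ODE_unique_solution
    {k : Type} [Field k] [CharZero k] (q n : ℕ) (hq : 1 ≤ q) (hn : 1 ≤ n)
    (P : Fin n → MvPolynomial (Fin n × Fin q) k)
    (c : Fin n × Fin q → k) :
    ∃! x : Fin n → PowerSeries k,
      (∀ j, D^[q] (x j) =
        MvPolynomial.aeval (fun v : Fin n × Fin q => D^[(v.2 : ℕ)] (x v.1)) (P j)) ∧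
      (∀ (j : Fin n) (l : Fin q),
        PowerSeries.constantCoeff (D^[(l : ℕ)] (x j)) = c (j, l)) :=
  polynomial_ODE_unique_solution_general q n P c
end
end
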